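/- arXiv:2409.06350 — 4 statements merged into one kernel-verified Lean document; each statement's English description precedes it below -/
import Mathlib

section
/- For every odd integer n ≥ 3, the group EM_n is generated by the two elements T·σ₁ and T·α₀. -/
/-!
The extended mapping class group `EM n` of the `n`-punctured sphere, presented with
generators `σ₁, …, σ_{n-1}`, `T` and relations:
`T² = 1`; `(T σᵢ)² = 1`; `σᵢσⱼ = σⱼσᵢ` for `|i - j| ≥ 2`;
`σᵢσⱼσᵢ = σⱼσᵢσⱼ` for `|i - j| = 1`;
`σ₁⋯σ_{n-1} σ_{n-1}⋯σ₁ = 1`; `(σ₁⋯σ_{n-1})ⁿ = 1`.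
-/

namespace SphereEMCG

/-- Generators: `none` is the reflection `T`; `some i` is the half-twist `σ_{i+1}`. -/
abbrev Gen (n : ℕ) := Option (Fin (n - 1))

/-- The generator `T` as an element of the free group. -/
def Tf (n : ℕ) : FreeGroup (Gen n) := FreeGroup.of (none : Gen n)

/-- The generator `σ_i` (for `1 ≤ i ≤ n - 1`) as an element of the free group. -/
def σf (n : ℕ) (i : ℕ) : FreeGroup (Gen n) :=
  if h : 1 ≤ i ∧ i ≤ n - 1 then FreeGroup.of (some ⟨i - 1, by omega⟩) else 1

/-- The word `σ_a σ_{a+1} ⋯ σ_b` in the free group. -/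
def σfProd (n : ℕ) (a b : ℕ) : FreeGroup (Gen n) :=
  ((List.range' a (b + 1 - a)).map (σf n)).prod

/-- The word `σ_b σ_{b-1} ⋯ σ_a` in the free group. -/
def σfProdRev (n : ℕ) (a b : ℕ) : FreeGroup (Gen n) :=
  ((List.range' a (b + 1 - a)).reverse.map (σf n)).prod

/-- The defining relations of the extended mapping class group of the
`n`-punctured sphere. -/
def rels (n : ℕ) : Set (FreeGroup (Gen n)) :=
  { r | r = Tf n * Tf n
      ∨ (∃ i, 1 ≤ i ∧ i ≤ n - 1 ∧ r = (Tf n * σf n i) * (Tf n * σf n i))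
      ∨ (∃ i j, 1 ≤ i ∧ i ≤ n - 1 ∧ 1 ≤ j ∧ j ≤ n - 1 ∧ (i + 2 ≤ j ∨ j + 2 ≤ i) ∧
          r = σf n i * σf n j * (σf n j * σf n i)⁻¹)
      ∨ (∃ i j, 1 ≤ i ∧ i ≤ n - 1 ∧ 1 ≤ j ∧ j ≤ n - 1 ∧ (i + 1 = j ∨ j + 1 = i) ∧
          r = σf n i * σf n j * σf n i * (σf n j * σf n i * σf n j)⁻¹)
      ∨ r = σfProd n 1 (n - 1) * σfProdRev n 1 (n - 1)
      ∨ r = (σfProd n 1 (n - 1)) ^ n }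

/-- The extended mapping class group of the `n`-punctured sphere, by its
standard presentation. -/
abbrev EM (n : ℕ) := PresentedGroup (rels n)

/-- The orientation-reversing mapping class `T` in `EM n`. -/
def T (n : ℕ) : EM n := PresentedGroup.mk (rels n) (Tf n)

/-- The half-twist `σ_i` in `EM n`. -/
def σ (n : ℕ) (i : ℕ) : EM n := PresentedGroup.mk (rels n) (σf n i)

/-- `α₀ = σ₁ ⋯ σ_{n-1}` in `EM n`. -/
def α₀ (n : ℕ) : EM n := PresentedGroup.mk (rels n) (σfProd n 1 (n - 1))

/-- `α₂ = σ₁ ⋯ σ_{n-3} σ_{n-2}²` in `EM n`. -/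
def α₂ (n : ℕ) : EM n := PresentedGroup.mk (rels n) (σfProd n 1 (n - 2) * σf n (n - 2))


-- auxiliary
variable {n : ℕ}

lemma mk_rel {r : FreeGroup (Gen n)} (h : r ∈ rels n) : PresentedGroup.mk (rels n) r = 1 := by
  have : r ∈ Subgroup.normalClosure (rels n) := Subgroup.subset_normalClosure h
  exact (QuotientGroup.eq_one_iff r).mpr this

lemma T_sq : T n * T n = 1 := by
  rw [T, ← map_mul]; exact mk_rel (Or.inl rfl)

lemma σ_eq_one {i : ℕ} (h : ¬(1 ≤ i ∧ i ≤ n - 1)) : σ n i = 1 := by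
  rw [σ, σf, dif_neg h, map_one]

lemma Tσ_sq {i : ℕ} (h1 : 1 ≤ i) (h2 : i ≤ n - 1) :
    (T n * σ n i) * (T n * σ n i) = 1 := by
  rw [T, σ, ← map_mul, ← map_mul]
  exact mk_rel (Or.inr (Or.inl ⟨i, h1, h2, rfl⟩))

lemma TσT (i : ℕ) : T n * σ n i * T n = (σ n i)⁻¹ := by
  by_cases h : 1 ≤ i ∧ i ≤ n - 1
  · have h2 := Tσ_sq (n := n) h.1 h.2
    have h2' : (T n * σ n i * T n) * σ n i = 1 := by rw [← h2]; group
    exact eq_inv_of_mul_eq_one_left h2'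
  · rw [σ_eq_one h, mul_one, T_sq, inv_one]

lemma comm_rel {i j : ℕ} (h1 : 1 ≤ i) (h2 : i ≤ n - 1) (h3 : 1 ≤ j) (h4 : j ≤ n - 1)
    (h5 : i + 2 ≤ j ∨ j + 2 ≤ i) : σ n i * σ n j = σ n j * σ n i := by
  have h := mk_rel (n := n) (Or.inr (Or.inr (Or.inl ⟨i, j, h1, h2, h3, h4, h5, rfl⟩)))
  rw [map_mul, map_inv, map_mul, map_mul] at h
  exact mul_inv_eq_one.mp h

lemma braid_rel {i j : ℕ} (h1 : 1 ≤ i) (h2 : i ≤ n - 1) (h3 : 1 ≤ j) (h4 : j ≤ n - 1)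
    (h5 : i + 1 = j ∨ j + 1 = i) :
    σ n i * σ n j * σ n i = σ n j * σ n i * σ n j := by
  have h := mk_rel (n := n)
    (Or.inr (Or.inr (Or.inr (Or.inl ⟨i, j, h1, h2, h3, h4, h5, rfl⟩))))
  rw [map_mul, map_inv, map_mul, map_mul, map_mul] at h
  exact mul_inv_eq_one.mp h

/-- commuting when indices are far apart, allowing out-of-range indices. -/
lemma comm_far {i j : ℕ} (h1 : 1 ≤ i) (hij : i + 2 ≤ j) :
    Commute (σ n i) (σ n j) := by
  by_cases hj : j ≤ n - 1
  · exact comm_rel h1 (by omega) (by omega) hj (Or.inl hij)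
  · rw [σ_eq_one (i := j) (by omega)]; exact Commute.one_right _

/-- the product `σ_a ⋯ σ_b` in `EM n`. -/
def sp (n a b : ℕ) : EM n := ((List.range' a (b + 1 - a)).map (σ n)).prod

lemma mk_σfProd (a b : ℕ) :
    PresentedGroup.mk (rels n) (σfProd n a b) = sp n a b := by
  rw [σfProd, map_list_prod, sp, List.map_map]; rfl

lemma mk_σfProdRev (a b : ℕ) :
    PresentedGroup.mk (rels n) (σfProdRev n a b)
      = ((List.range' a (b + 1 - a)).reverse.map (σ n)).prod := by
  rw [σfProdRev, map_list_prod, List.map_map]; rfl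

lemma α₀_eq_sp : α₀ n = sp n 1 (n - 1) := mk_σfProd 1 (n - 1)

lemma sp_split {a b c : ℕ} (h1 : a ≤ b + 1) (h2 : b ≤ c) :
    sp n a c = sp n a b * sp n (b + 1) c := by
  rw [sp, sp, sp, ← List.prod_append, ← List.map_append]
  rw [show c + 1 - (b + 1) = c - b from by omega]
  have h : List.range' a (b + 1 - a) ++ List.range' (a + (b + 1 - a)) (c - b)
      = List.range' a (b + 1 - a + (c - b)) := List.range'_append_1
  rw [show a + (b + 1 - a) = b + 1 from by omega] at h
  rw [h, show b + 1 - a + (c - b) = c + 1 - a from by omega]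

lemma sp_single (a : ℕ) : sp n a a = σ n a := by
  rw [sp, show a + 1 - a = 1 from by omega]
  simp

lemma sp_concat {a b : ℕ} (h : a ≤ b + 1) : sp n a (b + 1) = sp n a b * σ n (b + 1) := by
  rw [sp_split h (by omega), sp_single]

/-- `T` conjugates a product of σ's to the inverse of the reversed product. -/
lemma T_conj_list (l : List ℕ) :
    T n * (l.map (σ n)).prod * T n = ((l.reverse.map (σ n)).prod)⁻¹ := by
  induction l with
  | nil => simp [T_sq]
  | cons i l ih =>
    simp only [List.map_cons, List.prod_cons]
    have hT := T_sq (n := n)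
    have key : T n * (σ n i * (l.map (σ n)).prod) * T n
        = (T n * σ n i * T n) * (T n * (l.map (σ n)).prod * T n) := by
      calc T n * (σ n i * (l.map (σ n)).prod) * T n
          = T n * σ n i * (T n * T n) * (l.map (σ n)).prod * T n := by rw [hT]; group
        _ = (T n * σ n i * T n) * (T n * (l.map (σ n)).prod * T n) := by group
    rw [key, TσT, ih, List.reverse_cons, List.map_append, List.prod_append]
    simp [mul_inv_rev]

lemma T_comm_α₀ (hn : 3 ≤ n) : T n * α₀ n * T n = α₀ n := by
  have h := mk_rel (n := n) (Or.inr (Or.inr (Or.inr (Or.inr (Or.inl rfl)))))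
  rw [map_mul, mk_σfProdRev, mk_σfProd, ← α₀_eq_sp] at h
  have hrev := eq_inv_of_mul_eq_one_right h
  have hc := T_conj_list (n := n) (List.range' 1 (n - 1 + 1 - 1))
  rw [hrev, inv_inv] at hc
  conv_lhs => rw [α₀_eq_sp, sp]
  exact hc

lemma α₀_pow (hn : 3 ≤ n) : (α₀ n) ^ n = 1 := by
  have h := mk_rel (n := n) (Or.inr (Or.inr (Or.inr (Or.inr (Or.inr rfl)))))
  rw [map_pow, ← α₀] at h
  exact h

lemma commute_sp_right {i a b : ℕ} (h : ∀ j, a ≤ j → j < a + b → Commute (σ n i) (σ n j)) :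
    Commute (σ n i) (((List.range' a b).map (σ n)).prod) := by
  apply Commute.list_prod_right
  intro x hx
  simp only [List.mem_map, List.mem_range'_1] at hx
  obtain ⟨j, ⟨hj1, hj2⟩, rfl⟩ := hx
  exact h j hj1 hj2

lemma shift {i : ℕ} (hn : 3 ≤ n) (h1 : 1 ≤ i) (h2 : i ≤ n - 2) :
    α₀ n * σ n i = σ n (i + 1) * α₀ n := by
  have hi1 : i + 1 ≤ n - 1 := by omega
  have hsplit : sp n 1 (n - 1) = sp n 1 (i + 1) * sp n (i + 2) (n - 1) := by
    exact sp_split (by omega) (by omega)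
  have hup : sp n 1 (i + 1) = sp n 1 (i - 1) * σ n i * σ n (i + 1) := by
    have e1 : sp n 1 (i + 1) = sp n 1 i * σ n (i + 1) := sp_concat (by omega)
    have e2 : sp n 1 i = sp n 1 (i - 1) * σ n i := by
      have := sp_concat (n := n) (a := 1) (b := i - 1) (by omega)
      rw [show i - 1 + 1 = i by omega] at this
      exact this
    rw [e1, e2]
  -- σ i commutes with sp (i+2) (n-1)
  have hc1 : Commute (σ n i) (sp n (i + 2) (n - 1)) := by
    rw [sp]
    exact commute_sp_right (fun j hj _ => comm_far h1 (by omega))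
  -- σ (i+1) commutes with sp 1 (i-1)
  have hc2 : Commute (sp n 1 (i - 1)) (σ n (i + 1)) := by
    rw [sp]
    exact (commute_sp_right (fun j hj hj2 => (comm_far (by omega) (by omega)).symm)).symm
  have hbraid : σ n i * σ n (i + 1) * σ n i = σ n (i + 1) * σ n i * σ n (i + 1) :=
    braid_rel h1 (by omega) (by omega) hi1 (Or.inl rfl)
  rw [α₀_eq_sp, hsplit, hup]
  calc sp n 1 (i - 1) * σ n i * σ n (i + 1) * sp n (i + 2) (n - 1) * σ n i
      = sp n 1 (i - 1) * (σ n i * σ n (i + 1) * σ n i) * sp n (i + 2) (n - 1) := by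
        rw [mul_assoc _ (sp n (i + 2) (n - 1)) (σ n i), ← hc1.eq]; group
    _ = sp n 1 (i - 1) * (σ n (i + 1) * σ n i * σ n (i + 1)) * sp n (i + 2) (n - 1) := by
        rw [hbraid]
    _ = σ n (i + 1) * (sp n 1 (i - 1) * σ n i * σ n (i + 1) * sp n (i + 2) (n - 1)) := by
        rw [show sp n 1 (i - 1) * (σ n (i + 1) * σ n i * σ n (i + 1))
          = (sp n 1 (i - 1) * σ n (i + 1)) * (σ n i * σ n (i + 1)) by group, hc2.eq]; group


end SphereEMCG

open SphereEMCG in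
/-- For every odd `n ≥ 3`, the extended mapping class group of the `n`-punctured
sphere is generated by `T σ₁` and `T α₀`. -/
theorem em_generated_by_Tσ₁_Tα₀ (n : ℕ) (hn : 3 ≤ n) (hodd : Odd n) :
    Subgroup.closure {T n * σ n 1, T n * α₀ n} = (⊤ : Subgroup (EM n)) := by
  set H := Subgroup.closure {T n * σ n 1, T n * α₀ n} with hH
  have hTs : T n * σ n 1 ∈ H := Subgroup.subset_closure (by left; rfl)
  have hTA : T n * α₀ n ∈ H := Subgroup.subset_closure (by right; rfl)
  have hT2 := T_sq (n := n)
  have hcomm : Commute (T n) (α₀ n) := by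
    have h := T_comm_α₀ hn
    calc T n * α₀ n = T n * α₀ n * (T n * T n) := by rw [hT2]; group
      _ = (T n * α₀ n * T n) * T n := by group
      _ = α₀ n * T n := by rw [h]
  -- T = (T α₀)^n
  have h2 : T n ^ 2 = 1 := by rw [pow_two]; exact hT2
  have hTpow : T n ^ n = T n := by
    obtain ⟨k, hk⟩ := hodd
    calc T n ^ n = (T n ^ 2) ^ k * T n := by rw [← pow_mul, ← pow_succ, ← hk]
      _ = T n := by rw [h2, one_pow, one_mul]
  have hTn : T n ∈ H := by
    have : (T n * α₀ n) ^ n = T n ^ n * α₀ n ^ n := hcomm.mul_pow n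
    rw [hTpow, α₀_pow hn, mul_one] at this
    rw [← this]
    exact pow_mem hTA n
  have hA : α₀ n ∈ H := by
    have : α₀ n = T n * (T n * α₀ n) := by rw [← mul_assoc, hT2, one_mul]
    rw [this]; exact mul_mem hTn hTA
  have hs1 : σ n 1 ∈ H := by
    have : σ n 1 = T n * (T n * σ n 1) := by rw [← mul_assoc, hT2, one_mul]
    rw [this]; exact mul_mem hTn hTs
  have hσ : ∀ i, 1 ≤ i → i ≤ n - 1 → σ n i ∈ H := by
    intro i hi
    induction i, hi using Nat.le_induction with
    | base => intro _; exact hs1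
    | succ i hi ih =>
      intro hin
      have hsh := shift hn hi (by omega)
      have : σ n (i + 1) = α₀ n * σ n i * (α₀ n)⁻¹ := by
        rw [hsh]; group
      rw [this]
      exact mul_mem (mul_mem hA (ih (by omega))) (inv_mem hA)
  rw [eq_top_iff]
  intro x _
  refine PresentedGroup.generated_by (rels n) H ?_ x
  intro j
  match j with
  | none => exact hTn
  | some i =>
      have : (PresentedGroup.of (rels := rels n) (some i)) = σ n (i.val + 1) := by
        rw [σ, σf, dif_pos ⟨by omega, by omega⟩]
        congr
      rw [this]
      exact hσ (i.val + 1) (by omega) (by omega)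
end

section
/- Let A, B ∈ GL₂(ℤ), and suppose the images of A and B under the quotient map q : GL₂(ℤ) → PGL₂(ℤ) generate PGL₂(ℤ). Then A and B generate GL₂(ℤ). -/
/-- `GL₂(ℤ)`, the group of invertible 2×2 integer matrices. -/
abbrev GL2Z := GL (Fin 2) ℤ

/-- The subgroup `{Id, -Id}` of `GL₂(ℤ)`. -/
def negIdSubgroup : Subgroup GL2Z := Subgroup.zpowers (-1 : GL2Z)

instance : negIdSubgroup.Normal := by
  constructor
  intro x hx g
  obtain ⟨k, rfl⟩ := Subgroup.mem_zpowers_iff.mp hx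
  have h : Commute g ((-1 : GL2Z) ^ k) := (Commute.neg_one_right g).zpow_right k
  have hx' : g * (-1 : GL2Z) ^ k * g⁻¹ = (-1 : GL2Z) ^ k := by
    rw [h.eq, mul_inv_cancel_right]
  rw [hx']
  exact Subgroup.mem_zpowers_iff.mpr ⟨k, rfl⟩

/-- `PGL₂(ℤ)`, the quotient of `GL₂(ℤ)` by its center `{Id, -Id}`. -/
abbrev PGL2Z := GL2Z ⧸ negIdSubgroup

/-- The quotient homomorphism `GL₂(ℤ) → PGL₂(ℤ)`. -/
def qPGL : GL2Z →* PGL2Z := QuotientGroup.mk' negIdSubgroup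

/-- The element `J = [[0,-1],[1,0]]` of `GL₂(ℤ)`, with `J² = -Id`. -/
def Jmat : GL2Z :=
  ⟨!![0,-1;1,0], !![0,1;-1,0],
    by ext i j; fin_cases i <;> fin_cases j <;>
      simp [Matrix.mul_apply, Fin.sum_univ_two],
    by ext i j; fin_cases i <;> fin_cases j <;>
      simp [Matrix.mul_apply, Fin.sum_univ_two]⟩

lemma Jmat_sq : Jmat * Jmat = (-1 : GL2Z) := by
  ext i j
  fin_cases i <;> fin_cases j <;>
    simp [Jmat, Matrix.mul_apply, Fin.sum_univ_two]

/-- If the images of `A, B ∈ GL₂(ℤ)` in `PGL₂(ℤ)` generate `PGL₂(ℤ)`, then `A` and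
`B` generate `GL₂(ℤ)`. -/
theorem gl2z_generated_of_pgl2z_generated (A B : GL2Z)
    (h : Subgroup.closure {qPGL A, qPGL B} = (⊤ : Subgroup PGL2Z)) :
    Subgroup.closure {A, B} = (⊤ : Subgroup GL2Z) := by
  set H := Subgroup.closure ({A, B} : Set GL2Z) with hH
  have hmap : H.map qPGL = ⊤ := by
    rw [hH, MonoidHom.map_closure]
    have : qPGL '' {A, B} = {qPGL A, qPGL B} := by
      simp [Set.image_insert_eq]
    rw [this, h]
  -- find a lift of the image of J inside H
  have hJ : qPGL Jmat ∈ H.map qPGL := hmap ▸ Subgroup.mem_top _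
  obtain ⟨x, hxH, hx⟩ := hJ
  -- x differs from J by a power of -1
  have hx' : ∃ z ∈ negIdSubgroup, x * z = Jmat := by
    rwa [qPGL, QuotientGroup.mk'_eq_mk'] at hx
  obtain ⟨z, hz, hxz⟩ := hx'
  obtain ⟨k, rfl⟩ := Subgroup.mem_zpowers_iff.mp hz
  -- compute: x² = J² = -1
  have hcomm : ∀ g : GL2Z, Commute g ((-1 : GL2Z) ^ k) :=
    fun g => (Commute.neg_one_right g).zpow_right k
  have hxsq : x * x = (-1 : GL2Z) := by
    have h1 : Jmat * Jmat = (x * (-1 : GL2Z) ^ k) * (x * (-1 : GL2Z) ^ k) := by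
      rw [hxz]
    have h2 : (x * (-1 : GL2Z) ^ k) * (x * (-1 : GL2Z) ^ k)
        = x * x * ((-1 : GL2Z) ^ k * (-1 : GL2Z) ^ k) := by
      exact (hcomm x).symm.mul_mul_mul_comm x ((-1 : GL2Z) ^ k)
    have h3 : ((-1 : GL2Z) ^ k * (-1 : GL2Z) ^ k) = 1 := by
      rw [← zpow_add]
      have : (-1 : GL2Z) ^ (k + k) = ((-1 : GL2Z) ^ 2) ^ k := by
        rw [← zpow_natCast ((-1 : GL2Z)) 2, ← zpow_mul]
        ring_nf
      rw [this]
      norm_num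
    have := Jmat_sq
    rw [h1, h2, h3, mul_one] at this
    exact this
  have hneg : (-1 : GL2Z) ∈ H := hxsq ▸ H.mul_mem hxH hxH
  have hker : negIdSubgroup ≤ H := by
    rw [negIdSubgroup, Subgroup.zpowers_le]
    exact hneg
  -- conclude: every element of GL2Z lies in H
  rw [eq_top_iff]
  intro g _
  have hg : qPGL g ∈ H.map qPGL := hmap ▸ Subgroup.mem_top _
  obtain ⟨y, hyH, hy⟩ := hg
  have : ∃ z ∈ negIdSubgroup, y * z = g := by
    rwa [qPGL, QuotientGroup.mk'_eq_mk'] at hy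
  obtain ⟨z, hz, rfl⟩ := this
  exact H.mul_mem hyH (hker hz)
end

section
/- For n ≥ 3, in the group EM_n one has T·α₀·T = α₀; consequently, the element T·α₀ has finite order, equal to n if n is even and to 2n if n is odd. -/
set_option linter.unusedVariables false


namespace SphereEMCGAux
open SphereEMCG Equiv List

/-! ### Generic swap lemmas -/

private lemma swap_commute {β : Type*} [DecidableEq β] {a b c d : β}
    (h1 : a ≠ c) (h2 : a ≠ d) (h3 : b ≠ c) (h4 : b ≠ d) :
    Equiv.swap a b * Equiv.swap c d = Equiv.swap c d * Equiv.swap a b := by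
  have hd : (Equiv.swap a b).Disjoint (Equiv.swap c d) := by
    intro x
    by_cases hxa : x = a
    · subst hxa; right; exact swap_apply_of_ne_of_ne h1 h2
    by_cases hxb : x = b
    · subst hxb; right; exact swap_apply_of_ne_of_ne h3 h4
    left; exact swap_apply_of_ne_of_ne hxa hxb
  exact hd.commute

private lemma swap_braid {β : Type*} [DecidableEq β] {a b c : β}
    (hab : a ≠ b) (hbc : b ≠ c) (hac : a ≠ c) :
    Equiv.swap a b * Equiv.swap b c * Equiv.swap a b
      = Equiv.swap b c * Equiv.swap a b * Equiv.swap b c := by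
  have h1 := Equiv.swap_mul_swap_mul_swap (x := c) (y := b) (z := a) (Ne.symm hbc) (Ne.symm hac)
  have h2 := Equiv.swap_mul_swap_mul_swap (x := a) (y := b) (z := c) hab hac
  rw [swap_comm b a, swap_comm c b] at h1
  rw [swap_comm c a] at h2
  rw [h1, h2]

variable {n : ℕ}

private lemma cast_ne {a b : ℕ} (ha : a < n) (hb : b < n) (h : a ≠ b) :
    (a : ZMod n) ≠ (b : ZMod n) := by
  intro he
  exact h (by have := congrArg ZMod.val he
              rwa [ZMod.val_cast_of_lt ha, ZMod.val_cast_of_lt hb] at this)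

/-- The image of `σ_i` in `Perm (ZMod n)`. -/
private def sP (n i : ℕ) : Equiv.Perm (ZMod n) :=
  Equiv.swap ((i - 1 : ℕ) : ZMod n) ((i : ℕ) : ZMod n)

/-- Product `s_a s_{a+1} ⋯ s_{a+k-1}`. -/
private def prS (n a k : ℕ) : Equiv.Perm (ZMod n) := ((List.range' a k).map (sP n)).prod

private lemma prS_succ (a k : ℕ) : prS n a (k + 1) = sP n a * prS n (a + 1) k := by
  rw [prS, List.range'_succ]; simp [prS]

private lemma prS_top : ∀ k a : ℕ,
    prS n a (k + 1) ((a + k : ℕ) : ZMod n) = ((a - 1 : ℕ) : ZMod n) := by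
  intro k
  induction k with
  | zero =>
    intro a
    simp only [prS, List.range'_succ, List.range', List.map_cons, List.map_nil,
      List.prod_cons, List.prod_nil, mul_one, Nat.add_zero]
    exact swap_apply_right _ _
  | succ k ih =>
    intro a
    rw [prS_succ, Equiv.Perm.mul_apply]
    have e : a + (k + 1) = (a + 1) + k := by omega
    rw [e, ih (a + 1)]
    have e2 : a + 1 - 1 = a := by omega
    rw [e2]
    exact swap_apply_right _ _

private lemma prS_fix_hi : ∀ k j m : ℕ, m + 2 ≤ j → m < n → j + k ≤ n →
    prS n j k ((m : ℕ) : ZMod n) = ((m : ℕ) : ZMod n) := by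
  intro k
  induction k with
  | zero => intro j m _ _ _; simp [prS]
  | succ k ih =>
    intro j m h1 h2 h3
    rw [prS_succ, Equiv.Perm.mul_apply, ih (j + 1) m (by omega) h2 (by omega)]
    exact swap_apply_of_ne_of_ne (cast_ne h2 (by omega) (by omega))
      (cast_ne h2 (by omega) (by omega))

private lemma prS_fix_lo : ∀ k j m : ℕ, 1 ≤ j → j + k ≤ m + 1 → m + 1 < n →
    prS n j k (((m + 1 : ℕ)) : ZMod n) = ((m + 1 : ℕ) : ZMod n) := by
  intro k
  induction k with
  | zero => intro j m _ _ _; simp [prS]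
  | succ k ih =>
    intro j m hj h1 h2
    rw [prS_succ, Equiv.Perm.mul_apply, ih (j + 1) m (by omega) (by omega) h2]
    exact swap_apply_of_ne_of_ne (cast_ne h2 (by omega) (by omega))
      (cast_ne h2 (by omega) (by omega))

private lemma prS_apply (hn : 3 ≤ n) (m : ℕ) (hm : m < n) :
    prS n 1 (n - 1) ((m : ℕ) : ZMod n) = ((m + 1 : ℕ) : ZMod n) := by
  by_cases h : m = n - 1
  · have e1 : n - 1 = (n - 2) + 1 := by omega
    have e2 : m = 1 + (n - 2) := by omega
    rw [e1, e2, prS_top (n - 2) 1]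
    have : 1 + (n - 2) + 1 = n := by omega
    rw [this]
    simp [ZMod.natCast_self]
  · have hm2 : m + 2 ≤ n := by omega
    have hsplit : List.range' 1 (n - 1)
        = List.range' 1 m ++ ((m + 1) :: List.range' (m + 2) (n - 2 - m)) := by
      rw [← List.range'_succ (s := m + 1) (n := n - 2 - m) (step := 1)]
      have := List.range'_append (s := 1) (m := m) (n := n - 2 - m + 1) (step := 1)
      simp only [one_mul] at this
      rw [show (1 : ℕ) + m = m + 1 by omega] at this
      rw [this]
      congr 1
      omega
    have hps : prS n 1 (n - 1) = prS n 1 m * (sP n (m + 1) * prS n (m + 2) (n - 2 - m)) := by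
      rw [prS, hsplit]
      simp [prS, sP]
    rw [hps, Equiv.Perm.mul_apply, Equiv.Perm.mul_apply,
      prS_fix_hi (n - 2 - m) (m + 2) m (by omega) hm (by omega)]
    have e : sP n (m + 1) ((m : ℕ) : ZMod n) = ((m + 1 : ℕ) : ZMod n) := by
      rw [sP, show m + 1 - 1 = m from rfl]
      exact swap_apply_left _ _
    rw [e]
    exact prS_fix_lo m 1 m (le_refl 1) (by omega) (by omega)

/-- Translations of `ZMod n` as permutations, as a monoid hom. -/
private def addHom (n : ℕ) : Multiplicative (ZMod n) →* Equiv.Perm (ZMod n) where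
  toFun x := Equiv.addRight x.toAdd
  map_one' := by ext y; simp
  map_mul' x y := by
    ext z
    simp only [Equiv.Perm.mul_apply, Equiv.coe_addRight, toAdd_mul]
    ring

private lemma addHom_injective : Function.Injective (addHom n) := by
  intro x y h
  have := congrArg (fun e => e 0)
    (congrArg (fun (e : Equiv.Perm (ZMod n)) => (e : ZMod n → ZMod n)) h)
  simp only [addHom, MonoidHom.coe_mk, OneHom.coe_mk, Equiv.coe_addRight, zero_add] at this
  exact Multiplicative.toAdd.injective this

private lemma orderOf_addHom_one : orderOf (addHom n (Multiplicative.ofAdd 1)) = n := by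
  rw [orderOf_injective (addHom n) addHom_injective, orderOf_ofAdd_eq_addOrderOf,
    ZMod.addOrderOf_one]

private lemma prS_eq (hn : 3 ≤ n) : prS n 1 (n - 1) = addHom n (Multiplicative.ofAdd 1) := by
  haveI : NeZero n := ⟨by omega⟩
  ext x
  have hx : ((x.val : ℕ) : ZMod n) = x := by
    rw [ZMod.natCast_val, ZMod.cast_id]
  conv_lhs => rw [← hx]
  rw [prS_apply hn x.val (ZMod.val_lt x)]
  show ((x.val + 1 : ℕ) : ZMod n) = x + 1
  push_cast
  rw [hx]

private lemma orderOf_prS (hn : 3 ≤ n) : orderOf (prS n 1 (n - 1)) = n := by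
  rw [prS_eq hn, orderOf_addHom_one]

private lemma prS_pow (hn : 3 ≤ n) : (prS n 1 (n - 1)) ^ n = 1 := by
  have h : orderOf (prS n 1 (n - 1)) ∣ n := by rw [orderOf_prS hn]
  exact orderOf_dvd_iff_pow_eq_one.mp h

/-! ### The representation of the presented group -/

/-- The images of the generators. -/
private def fG (n : ℕ) : Gen n → Equiv.Perm (ZMod n) × Multiplicative (ZMod 2)
  | none => (1, Multiplicative.ofAdd 1)
  | some k => (sP n (k.val + 1), 1)

private lemma lift_Tf :
    FreeGroup.lift (fG n) (Tf n) = (1, Multiplicative.ofAdd (1 : ZMod 2)) :=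
  FreeGroup.lift_apply_of

private lemma lift_σf {i : ℕ} (h1 : 1 ≤ i) (h2 : i ≤ n - 1) :
    FreeGroup.lift (fG n) (σf n i) = (sP n i, 1) := by
  rw [σf, dif_pos ⟨h1, h2⟩, FreeGroup.lift_apply_of]
  show (sP n ((i - 1) + 1), (1 : Multiplicative (ZMod 2))) = (sP n i, 1)
  rw [Nat.sub_add_cancel h1]

private lemma lift_prod (l : List ℕ) (h : ∀ i ∈ l, 1 ≤ i ∧ i ≤ n - 1) :
    FreeGroup.lift (fG n) ((l.map (σf n)).prod)
      = ((l.map (sP n)).prod, (1 : Multiplicative (ZMod 2))) := by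
  induction l with
  | nil => simp; rfl
  | cons a l ih =>
    simp only [List.map_cons, List.prod_cons, map_mul]
    rw [lift_σf (h a (List.mem_cons_self (a := a) (l := l))).1 (h a (List.mem_cons_self (a := a) (l := l))).2,
      ih (fun i hi => h i (List.mem_cons_of_mem a hi)), Prod.mk_mul_mk, one_mul]

private lemma lift_σfProd (hn : 3 ≤ n) :
    FreeGroup.lift (fG n) (σfProd n 1 (n - 1))
      = (prS n 1 (n - 1), (1 : Multiplicative (ZMod 2))) := by
  rw [σfProd, show n - 1 + 1 - 1 = n - 1 by omega,
    lift_prod _ (fun i hi => by rw [List.mem_range'_1] at hi; omega)]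
  rfl

private lemma rev_prS (l : List ℕ) :
    ((l.reverse.map (sP n)).prod) = ((l.map (sP n)).prod)⁻¹ := by
  conv_rhs => rw [List.prod_inv_reverse]
  rw [List.map_map, ← List.map_reverse]
  simp only [Function.comp_def, sP, Equiv.swap_inv]
  rfl

private lemma lift_σfProdRev (hn : 3 ≤ n) :
    FreeGroup.lift (fG n) (σfProdRev n 1 (n - 1))
      = ((prS n 1 (n - 1))⁻¹, (1 : Multiplicative (ZMod 2))) := by
  rw [σfProdRev, show n - 1 + 1 - 1 = n - 1 by omega,
    lift_prod _ (fun i hi => by rw [List.mem_reverse, List.mem_range'_1] at hi; omega),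
    rev_prS]
  rfl

private lemma sP_as_swap {i : ℕ} :
    sP n i = Equiv.swap ((i - 1 : ℕ) : ZMod n) ((i : ℕ) : ZMod n) := rfl

private lemma hrels (hn : 3 ≤ n) :
    ∀ r ∈ rels n, FreeGroup.lift (fG n) r = 1 := by
  intro r hr
  rcases hr with h | ⟨i, hi1, hi2, h⟩ | ⟨i, j, hi1, hi2, hj1, hj2, hij, h⟩ |
    ⟨i, j, hi1, hi2, hj1, hj2, hij, h⟩ | h | h
  · subst h
    rw [map_mul, lift_Tf, Prod.mk_mul_mk, one_mul]
    rw [Prod.mk_eq_one]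
    exact ⟨rfl, by decide⟩
  · subst h
    simp only [map_mul, lift_Tf, lift_σf hi1 hi2, Prod.mk_mul_mk]
    rw [Prod.mk_eq_one]
    refine ⟨?_, by decide⟩
    rw [one_mul, sP]
    exact Equiv.swap_mul_self _ _
  · subst h
    have hcomm : sP n i * sP n j = sP n j * sP n i := by
      rw [sP_as_swap, sP_as_swap]
      exact swap_commute
        (cast_ne (by omega) (by omega) (by omega)) (cast_ne (by omega) (by omega) (by omega))
        (cast_ne (by omega) (by omega) (by omega)) (cast_ne (by omega) (by omega) (by omega))
    simp only [map_mul, map_inv, lift_σf hi1 hi2, lift_σf hj1 hj2]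
    have hc2 : (sP n i, (1 : Multiplicative (ZMod 2))) * (sP n j, 1)
        = (sP n j, (1 : Multiplicative (ZMod 2))) * (sP n i, 1) := by
      rw [Prod.mk_mul_mk, Prod.mk_mul_mk, hcomm]
    rw [hc2, mul_inv_cancel]
  · subst h
    have hbraid : sP n i * sP n j * sP n i = sP n j * sP n i * sP n j := by
      rcases hij with hij | hij
      · have hj : sP n j = Equiv.swap ((i : ℕ) : ZMod n) ((j : ℕ) : ZMod n) := by
          rw [sP_as_swap, show j - 1 = i by omega]
        rw [sP_as_swap (i := i), hj]
        exact swap_braid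
          (cast_ne (by omega) (by omega) (by omega)) (cast_ne (by omega) (by omega) (by omega))
          (cast_ne (by omega) (by omega) (by omega))
      · have hi : sP n i = Equiv.swap ((j : ℕ) : ZMod n) ((i : ℕ) : ZMod n) := by
          rw [sP_as_swap, show i - 1 = j by omega]
        rw [sP_as_swap (i := j), hi]
        exact (swap_braid
          (cast_ne (by omega) (by omega) (by omega)) (cast_ne (by omega) (by omega) (by omega))
          (cast_ne (by omega) (by omega) (by omega))).symm
    simp only [map_mul, map_inv, lift_σf hi1 hi2, lift_σf hj1 hj2]
    have hb2 : (sP n i, (1 : Multiplicative (ZMod 2))) * (sP n j, 1) * (sP n i, 1)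
        = (sP n j, (1 : Multiplicative (ZMod 2))) * (sP n i, 1) * (sP n j, 1) := by
      rw [Prod.mk_mul_mk, Prod.mk_mul_mk, Prod.mk_mul_mk, Prod.mk_mul_mk, hbraid]
    rw [hb2, mul_inv_cancel]
  · subst h
    rw [map_mul, lift_σfProd hn, lift_σfProdRev hn, Prod.mk_mul_mk, mul_inv_cancel, mul_one]
    rfl
  · subst h
    rw [map_pow, lift_σfProd hn, Prod.pow_mk, prS_pow hn, one_pow]
    rfl

/-! ### Relations in the presented group -/

private lemma mk_rel {r : FreeGroup (Gen n)} (h : r ∈ rels n) :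
    PresentedGroup.mk (rels n) r = 1 :=
  (QuotientGroup.eq_one_iff r).mpr (Subgroup.subset_normalClosure h)

private lemma hT2 : T n * T n = 1 := by
  have h := mk_rel (n := n) (Or.inl rfl)
  rwa [map_mul] at h

private lemma hTσT {i : ℕ} (h1 : 1 ≤ i) (h2 : i ≤ n - 1) :
    T n * σ n i * T n = (σ n i)⁻¹ := by
  have h := mk_rel (n := n) (Or.inr (Or.inl ⟨i, h1, h2, rfl⟩))
  rw [map_mul, map_mul] at h
  have h' : (T n * σ n i * T n) * σ n i = 1 := by
    calc (T n * σ n i * T n) * σ n i = (T n * σ n i) * (T n * σ n i) := by group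
    _ = 1 := h
  exact eq_inv_of_mul_eq_one_left h'

private lemma hαrev : α₀ n * PresentedGroup.mk (rels n) (σfProdRev n 1 (n - 1)) = 1 := by
  have h := mk_rel (n := n) (Or.inr (Or.inr (Or.inr (Or.inr (Or.inl rfl)))))
  rwa [map_mul] at h

private lemma hαn : (α₀ n) ^ n = 1 := by
  have h := mk_rel (n := n) (Or.inr (Or.inr (Or.inr (Or.inr (Or.inr rfl)))))
  rwa [map_pow] at h

private lemma conj_prod : ∀ l : List ℕ, (∀ i ∈ l, 1 ≤ i ∧ i ≤ n - 1) →
    T n * (l.map (σ n)).prod * T n = ((l.reverse.map (σ n)).prod)⁻¹ := by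
  intro l
  induction l with
  | nil => intro _; simp [hT2]
  | cons a l ih =>
    intro h
    have ha := h a (List.mem_cons_self (a := a) (l := l))
    have hl := fun i hi => h i (List.mem_cons_of_mem a hi)
    have key : T n * ((a :: l).map (σ n)).prod * T n
        = (T n * σ n a * T n) * (T n * (l.map (σ n)).prod * T n) := by
      simp only [List.map_cons, List.prod_cons]
      have : T n * T n = 1 := hT2
      calc T n * (σ n a * (l.map (σ n)).prod) * T n
          = (T n * σ n a) * 1 * ((l.map (σ n)).prod * T n) := by group
        _ = (T n * σ n a) * (T n * T n) * ((l.map (σ n)).prod * T n) := by rw [this]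
        _ = (T n * σ n a * T n) * (T n * (l.map (σ n)).prod * T n) := by group
    rw [key, hTσT ha.1 ha.2, ih hl]
    rw [List.reverse_cons, List.map_append, List.prod_append]
    simp [mul_inv_rev]

private lemma α₀_eq : α₀ n = ((List.range' 1 (n - 1)).map (σ n)).prod := by
  rw [α₀, σfProd, show n - 1 + 1 - 1 = n - 1 by omega, map_list_prod,
    List.map_map]
  rfl

private lemma mk_rev_eq :
    PresentedGroup.mk (rels n) (σfProdRev n 1 (n - 1))
      = (((List.range' 1 (n - 1)).reverse.map (σ n)).prod) := by
  rw [σfProdRev, show n - 1 + 1 - 1 = n - 1 by omega, map_list_prod,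
    List.map_map]
  rfl

private lemma TαT (hn : 3 ≤ n) : T n * α₀ n * T n = α₀ n := by
  have hbound : ∀ i ∈ List.range' 1 (n - 1), 1 ≤ i ∧ i ≤ n - 1 := by
    intro i hi; rw [List.mem_range'_1] at hi; omega
  rw [α₀_eq, conj_prod _ hbound, ← mk_rev_eq]
  have : PresentedGroup.mk (rels n) (σfProdRev n 1 (n - 1)) = (α₀ n)⁻¹ :=
    eq_inv_of_mul_eq_one_right hαrev
  rw [this, inv_inv, α₀_eq]

end SphereEMCGAux


open SphereEMCG in
/-- For `n ≥ 3`, in the extended mapping class group of the `n`-punctured sphere,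
`T α₀ T = α₀`; consequently `T α₀` has finite order, equal to `n` if `n` is even
and `2n` if `n` is odd. -/
theorem Tα₀_relation_and_order (n : ℕ) (hn : 3 ≤ n) :
    T n * α₀ n * T n = α₀ n ∧ IsOfFinOrder (T n * α₀ n) ∧
      orderOf (T n * α₀ n) = (if Even n then n else 2 * n) := by
  have hTαT : T n * α₀ n * T n = α₀ n := SphereEMCGAux.TαT hn
  -- the representation
  let φ : EM n →* Equiv.Perm (ZMod n) × Multiplicative (ZMod 2) :=
    PresentedGroup.toGroup (SphereEMCGAux.hrels hn)
  have hφT : φ (T n) = (1, Multiplicative.ofAdd (1 : ZMod 2)) := SphereEMCGAux.lift_Tf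
  have hφα : φ (α₀ n) = (SphereEMCGAux.prS n 1 (n - 1), (1 : Multiplicative (ZMod 2))) :=
    SphereEMCGAux.lift_σfProd hn
  have hφx : φ (T n * α₀ n)
      = (SphereEMCGAux.prS n 1 (n - 1), Multiplicative.ofAdd (1 : ZMod 2)) := by
    rw [map_mul, hφT, hφα, Prod.mk_mul_mk, one_mul, mul_one]
  have hord2 : orderOf (Multiplicative.ofAdd (1 : ZMod 2)) = 2 := by
    rw [orderOf_ofAdd_eq_addOrderOf, ZMod.addOrderOf_one]
  have hordφ : orderOf (φ (T n * α₀ n)) = Nat.lcm n 2 := by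
    rw [hφx, Prod.orderOf_mk, SphereEMCGAux.orderOf_prS hn, hord2]
  set L : ℕ := if Even n then n else 2 * n with hL
  have hlcm : Nat.lcm n 2 = L := by
    by_cases he : Even n
    · rw [hL, if_pos he]
      refine Nat.dvd_antisymm (Nat.lcm_dvd dvd_rfl he.two_dvd) (Nat.dvd_lcm_left n 2)
    · rw [hL, if_neg he]
      have hodd : Odd n := Nat.odd_iff.mpr (Nat.not_even_iff.mp he)
      rw [(Nat.coprime_two_right.mpr hodd).lcm_eq_mul, mul_comm]
  have hcomm : Commute (T n) (α₀ n) := by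
    show T n * α₀ n = α₀ n * T n
    conv_rhs => rw [← hTαT]
    rw [mul_assoc, SphereEMCGAux.hT2, mul_one]
  have hEvenL : Even L := by
    by_cases he : Even n
    · rwa [hL, if_pos he]
    · rw [hL, if_neg he]; exact even_two_mul n
  have hndvdL : n ∣ L := by
    by_cases he : Even n
    · rw [hL, if_pos he]
    · rw [hL, if_neg he]; exact dvd_mul_left n 2
  have hxL : (T n * α₀ n) ^ L = 1 := by
    rw [hcomm.mul_pow]
    obtain ⟨k, hk⟩ := hEvenL
    obtain ⟨m, hm⟩ := hndvdL
    have hTL : T n ^ L = 1 := by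
      rw [show L = k + k from hk, pow_add, ← pow_add, show k + k = 2 * k by ring, pow_mul,
        show T n ^ 2 = T n * T n from sq (T n), SphereEMCGAux.hT2, one_pow]
    have hαL : α₀ n ^ L = 1 := by
      rw [hm, pow_mul, SphereEMCGAux.hαn, one_pow]
    rw [hTL, hαL, one_mul]
  have hLpos : 0 < L := by
    by_cases he : Even n <;> simp only [hL, if_pos, if_neg, he, ite_true, ite_false] <;> omega
  have hdvd1 : orderOf (T n * α₀ n) ∣ L := orderOf_dvd_of_pow_eq_one hxL
  have hdvd2 : L ∣ orderOf (T n * α₀ n) := by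
    rw [← hlcm, ← hordφ]
    exact orderOf_map_dvd φ (T n * α₀ n)
  have hord : orderOf (T n * α₀ n) = L := Nat.dvd_antisymm hdvd1 hdvd2
  refine ⟨hTαT, ?_, hord⟩
  exact isOfFinOrder_iff_pow_eq_one.mpr ⟨L, hLpos, hxL⟩
end

section
/- For every even integer n ≥ 6, with a = σ_{n-3}·T·α₀·σ_{n-3}⁻¹ and b = T·σ_{n-1}⁻¹·α₂ in EM_n, and H the subgroup of EM_n generated by {a, b}: for every odd index k (with indices of the σ's taken modulo n, so that they lie in {1, …, n−1}) the element γ_k = σ_k·σ_{k+2}·σ_{k+4}⁻¹ belongs to H. -/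
namespace EMAux
open SphereEMCG

variable {n : ℕ}

lemma rel_one {r : FreeGroup (Gen n)} (h : r ∈ rels n) :
    PresentedGroup.mk (rels n) r = 1 :=
  (QuotientGroup.eq_one_iff r).mpr (Subgroup.subset_normalClosure h)

lemma T_mul_T : T n * T n = 1 := by
  simpa [T, map_mul] using rel_one (n := n) (Or.inl rfl)

lemma Tσ_sq (i : ℕ) (h1 : 1 ≤ i) (h2 : i ≤ n - 1) :
    (T n * σ n i) * (T n * σ n i) = 1 := by
  simpa [T, σ, map_mul] using rel_one (n := n) (Or.inr (Or.inl ⟨i, h1, h2, rfl⟩))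

lemma σ_comm (i j : ℕ) (h1 : 1 ≤ i) (h2 : i ≤ n - 1) (h3 : 1 ≤ j) (h4 : j ≤ n - 1)
    (h5 : i + 2 ≤ j ∨ j + 2 ≤ i) : σ n i * σ n j = σ n j * σ n i := by
  have := rel_one (n := n) (Or.inr (Or.inr (Or.inl ⟨i, j, h1, h2, h3, h4, h5, rfl⟩)))
  have h : σ n i * σ n j * (σ n j * σ n i)⁻¹ = 1 := by
    simpa [T, σ, map_mul] using this
  exact mul_inv_eq_one.mp h

lemma σ_braid (i j : ℕ) (h1 : 1 ≤ i) (h2 : i ≤ n - 1) (h3 : 1 ≤ j) (h4 : j ≤ n - 1)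
    (h5 : i + 1 = j ∨ j + 1 = i) :
    σ n i * σ n j * σ n i = σ n j * σ n i * σ n j := by
  have := rel_one (n := n) (Or.inr (Or.inr (Or.inr (Or.inl ⟨i, j, h1, h2, h3, h4, h5, rfl⟩))))
  have h : σ n i * σ n j * σ n i * (σ n j * σ n i * σ n j)⁻¹ = 1 := by
    simpa [T, σ, map_mul] using this
  exact mul_inv_eq_one.mp h

lemma prod_rev_one :
    PresentedGroup.mk (rels n) (σfProd n 1 (n - 1)) *
      PresentedGroup.mk (rels n) (σfProdRev n 1 (n - 1)) = 1 := by
  simpa [map_mul] using rel_one (n := n) (Or.inr (Or.inr (Or.inr (Or.inr (Or.inl rfl)))))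

lemma α₀_pow_n : (α₀ n) ^ n = 1 := by
  simpa [α₀, map_pow] using rel_one (n := n) (Or.inr (Or.inr (Or.inr (Or.inr (Or.inr rfl)))))

lemma σ_eq_one {i : ℕ} (h : ¬(1 ≤ i ∧ i ≤ n - 1)) : σ n i = 1 := by
  rw [σ, σf, dif_neg h, map_one]

lemma TσT (i : ℕ) : T n * σ n i * T n = (σ n i)⁻¹ := by
  by_cases h : 1 ≤ i ∧ i ≤ n - 1
  · have h2 := Tσ_sq (n := n) i h.1 h.2
    have h3 : T n * σ n i * T n * σ n i = 1 := by rw [← h2]; group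
    exact mul_eq_one_iff_eq_inv.mp h3
  · simp [σ_eq_one h, T_mul_T]

lemma mk_prod (l : List ℕ) :
    PresentedGroup.mk (rels n) ((l.map (σf n)).prod) = (l.map (σ n)).prod := by
  rw [map_list_prod, List.map_map]; rfl

/-- product σ_a σ_{a+1} ⋯ σ_{a+m-1} in `EM n` -/
def Lp (n a m : ℕ) : EM n := ((List.range' a m).map (σ n)).prod

lemma Lp_zero (a : ℕ) : Lp n a 0 = 1 := rfl

lemma Lp_succ_left (a m : ℕ) : Lp n a (m + 1) = σ n a * Lp n (a + 1) m := by
  simp [Lp, List.range'_succ]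

lemma Lp_one_add (a m : ℕ) : Lp n a (1 + m) = σ n a * Lp n (a + 1) m := by
  rw [add_comm]; exact Lp_succ_left a m

lemma Lp_append (a m k : ℕ) : Lp n a (m + k) = Lp n a m * Lp n (a + m) k := by
  rw [Lp, ← List.range'_append_1, List.map_append, List.prod_append]; rfl

lemma α₀_Lp : α₀ n = Lp n 1 (n - 1) := by
  rw [α₀, σfProd, mk_prod]; norm_num [Lp]

lemma commute_Lp {i a m : ℕ} (h1 : 1 ≤ i) (h2 : i ≤ n - 1)
    (hj : ∀ j, a ≤ j → j < a + m → (1 ≤ j ∧ j ≤ n - 1 ∧ (i + 2 ≤ j ∨ j + 2 ≤ i))) :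
    Commute (σ n i) (Lp n a m) := by
  apply Commute.list_prod_right
  intro x hx
  obtain ⟨u, hu, rfl⟩ := List.mem_map.mp hx
  have hu' := List.mem_range'_1.mp hu
  obtain ⟨c1, c2, c3⟩ := hj u hu'.1 hu'.2
  exact σ_comm i u h1 h2 c1 c2 c3

lemma shift (i : ℕ) (h1 : 1 ≤ i) (h2 : i ≤ n - 2) :
    α₀ n * σ n i = σ n (i + 1) * α₀ n := by
  have hn3 : 3 ≤ n := by omega
  have hsplit : n - 1 = (i - 1) + (1 + (1 + (n - i - 2))) := by omega
  have e0 : Lp n 1 (n - 1) =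
      Lp n 1 (i - 1) * (σ n i * (σ n (i + 1) * Lp n (i + 2) (n - i - 2))) := by
    have hi1 : 1 + (i - 1) = i := by omega
    have hi2 : i + 1 + 1 = i + 2 := by omega
    rw [hsplit, Lp_append, hi1, Lp_one_add, Lp_one_add, hi2]
  have e1 : α₀ n = Lp n 1 (i - 1) * (σ n i * (σ n (i + 1) * Lp n (i + 2) (n - i - 2))) := by
    rw [α₀_Lp, e0]
  have c1 : Commute (σ n i) (Lp n (i + 2) (n - i - 2)) :=
    commute_Lp h1 (by omega) (fun j hj1 hj2 => by omega)
  have c2 : Commute (σ n (i + 1)) (Lp n 1 (i - 1)) :=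
    commute_Lp (by omega) (by omega) (fun j hj1 hj2 => by omega)
  have b1 : σ n i * σ n (i + 1) * σ n i = σ n (i + 1) * σ n i * σ n (i + 1) :=
    σ_braid i (i + 1) h1 (by omega) (by omega) (by omega) (Or.inl rfl)
  calc α₀ n * σ n i
      = Lp n 1 (i - 1) * (σ n i * (σ n (i + 1) * (Lp n (i + 2) (n - i - 2) * σ n i))) := by
        rw [e1]; group
    _ = Lp n 1 (i - 1) * (σ n i * (σ n (i + 1) * (σ n i * Lp n (i + 2) (n - i - 2)))) := by
        rw [c1.symm.eq]
    _ = Lp n 1 (i - 1) * ((σ n i * σ n (i + 1) * σ n i) * Lp n (i + 2) (n - i - 2)) := by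
        group
    _ = Lp n 1 (i - 1) * ((σ n (i + 1) * σ n i * σ n (i + 1)) * Lp n (i + 2) (n - i - 2)) := by
        rw [b1]
    _ = (Lp n 1 (i - 1) * σ n (i + 1)) * (σ n i * (σ n (i + 1) * Lp n (i + 2) (n - i - 2))) := by
        group
    _ = (σ n (i + 1) * Lp n 1 (i - 1)) * (σ n i * (σ n (i + 1) * Lp n (i + 2) (n - i - 2))) := by
        rw [c2.symm.eq]
    _ = σ n (i + 1) * α₀ n := by rw [e1]; group

lemma Tconj_prod (l : List ℕ) :
    T n * (l.map (σ n)).prod * T n = (l.map (fun i => (σ n i)⁻¹)).prod := by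
  induction l with
  | nil => simpa using T_mul_T
  | cons x xs ih =>
      have : T n * (σ n x * (xs.map (σ n)).prod) * T n
          = (T n * σ n x * T n) * (T n * (xs.map (σ n)).prod * T n) := by
        have h := T_mul_T (n := n)
        calc T n * (σ n x * (xs.map (σ n)).prod) * T n
            = (T n * σ n x) * 1 * ((xs.map (σ n)).prod * T n) := by group
          _ = (T n * σ n x) * (T n * T n) * ((xs.map (σ n)).prod * T n) := by rw [h]
          _ = (T n * σ n x * T n) * (T n * (xs.map (σ n)).prod * T n) := by group
      simp only [List.map_cons, List.prod_cons, this, TσT, ih]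

lemma rev_inv (l : List ℕ) :
    ((l.reverse.map (σ n)).prod)⁻¹ = (l.map (fun i => (σ n i)⁻¹)).prod := by
  induction l with
  | nil => simp
  | cons x xs ih =>
      simp only [List.map_cons, List.prod_cons, List.reverse_cons, List.map_append,
        List.prod_append, mul_inv_rev, List.map_reverse] at ih ⊢
      simp [ih]

lemma Tα₀T : T n * α₀ n * T n = α₀ n := by
  have h5 := prod_rev_one (n := n)
  have hrev : α₀ n = ((((List.range' 1 (n - 1)).reverse.map (σ n))).prod)⁻¹ := by
    rw [eq_inv_iff_mul_eq_one]
    have : σfProdRev n 1 (n - 1) = ((List.range' 1 (n - 1)).reverse.map (σf n)).prod := by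
      simp [σfProdRev]
    calc α₀ n * ((List.range' 1 (n - 1)).reverse.map (σ n)).prod
        = PresentedGroup.mk (rels n) (σfProd n 1 (n - 1)) *
          PresentedGroup.mk (rels n) (σfProdRev n 1 (n - 1)) := by
          rw [this, map_list_prod, List.map_map]; rfl
      _ = 1 := h5
  calc T n * α₀ n * T n
      = ((List.range' 1 (n - 1)).map (fun i => (σ n i)⁻¹)).prod := by
        rw [α₀_Lp]; exact Tconj_prod _
    _ = α₀ n := by rw [hrev, rev_inv]

lemma Tα₀_comm : T n * α₀ n = α₀ n * T n := by
  have h := Tα₀T (n := n)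
  have hT := T_mul_T (n := n)
  calc T n * α₀ n = (T n * α₀ n * T n) * T n := by rw [mul_assoc, mul_assoc, hT]; group
    _ = α₀ n * T n := by rw [h]

/-- `s j = α₀^j σ₁ α₀^{-j}`; equals `σ (j+1)` for `j ≤ n-2`, and is `n`-periodic. -/
def ss (n : ℕ) (j : ℕ) : EM n := (α₀ n) ^ j * σ n 1 * ((α₀ n) ^ j)⁻¹

lemma ss_add (i j : ℕ) : ss n (i + j) = (α₀ n) ^ i * ss n j * ((α₀ n) ^ i)⁻¹ := by
  simp only [ss, pow_add]; group

lemma ss_zero : ss n 0 = σ n 1 := by simp [ss]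

lemma ss_succ (j : ℕ) : ss n (j + 1) = α₀ n * ss n j * (α₀ n)⁻¹ := by
  have := ss_add (n := n) 1 j
  rw [add_comm] at this
  simpa [pow_one] using this

lemma ss_σ : ∀ j, j ≤ n - 2 → ss n j = σ n (j + 1) := by
  intro j
  induction j with
  | zero => intro _; simpa using ss_zero
  | succ m ih =>
      intro h
      have hm : m ≤ n - 2 := by omega
      have hsh := shift (n := n) (m + 1) (by omega) h
      rw [ss_succ, ih hm]
      calc α₀ n * σ n (m + 1) * (α₀ n)⁻¹ = σ n (m + 1 + 1) * α₀ n * (α₀ n)⁻¹ := by rw [hsh]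
        _ = σ n (m + 1 + 1) := by group

lemma ss_per (j q : ℕ) : ss n (j + n * q) = ss n j := by
  have hpow : (α₀ n) ^ (j + n * q) = (α₀ n) ^ j := by
    rw [pow_add, pow_mul, α₀_pow_n, one_pow, mul_one]
  simp [ss, hpow]

lemma ss_braid (hn : 6 ≤ n) (j : ℕ) :
    ss n j * ss n (j + 1) * ss n j = ss n (j + 1) * ss n j * ss n (j + 1) := by
  have base : σ n 1 * σ n 2 * σ n 1 = σ n 2 * σ n 1 * σ n 2 :=
    σ_braid 1 2 (by omega) (by omega) (by omega) (by omega) (Or.inl rfl)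
  have e0 : ss n j = (α₀ n) ^ j * ss n 0 * ((α₀ n) ^ j)⁻¹ := by
    simpa using ss_add (n := n) j 0
  have e1 : ss n (j + 1) = (α₀ n) ^ j * ss n 1 * ((α₀ n) ^ j)⁻¹ := ss_add (n := n) j 1
  have h1 : ss n 1 = σ n 2 := ss_σ 1 (by omega)
  rw [e0, e1, ss_zero, h1]
  calc ((α₀ n) ^ j * σ n 1 * ((α₀ n) ^ j)⁻¹) * ((α₀ n) ^ j * σ n 2 * ((α₀ n) ^ j)⁻¹) *
        ((α₀ n) ^ j * σ n 1 * ((α₀ n) ^ j)⁻¹)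
      = (α₀ n) ^ j * (σ n 1 * σ n 2 * σ n 1) * ((α₀ n) ^ j)⁻¹ := by group
    _ = (α₀ n) ^ j * (σ n 2 * σ n 1 * σ n 2) * ((α₀ n) ^ j)⁻¹ := by rw [base]
    _ = ((α₀ n) ^ j * σ n 2 * ((α₀ n) ^ j)⁻¹) * ((α₀ n) ^ j * σ n 1 * ((α₀ n) ^ j)⁻¹) *
        ((α₀ n) ^ j * σ n 2 * ((α₀ n) ^ j)⁻¹) := by group

lemma ss_comm (j c : ℕ) (hc2 : 2 ≤ c) (hcn : c ≤ n - 2) :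
    ss n j * ss n (j + c) = ss n (j + c) * ss n j := by
  have base : σ n 1 * σ n (c + 1) = σ n (c + 1) * σ n 1 :=
    σ_comm 1 (c + 1) (by omega) (by omega) (by omega) (by omega) (Or.inl (by omega))
  have e0 : ss n j = (α₀ n) ^ j * ss n 0 * ((α₀ n) ^ j)⁻¹ := by
    simpa using ss_add (n := n) j 0
  have e1 : ss n (j + c) = (α₀ n) ^ j * ss n c * ((α₀ n) ^ j)⁻¹ := ss_add (n := n) j c
  have h1 : ss n c = σ n (c + 1) := ss_σ c hcn
  rw [e0, e1, ss_zero, h1]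
  calc ((α₀ n) ^ j * σ n 1 * ((α₀ n) ^ j)⁻¹) * ((α₀ n) ^ j * σ n (c + 1) * ((α₀ n) ^ j)⁻¹)
      = (α₀ n) ^ j * (σ n 1 * σ n (c + 1)) * ((α₀ n) ^ j)⁻¹ := by group
    _ = (α₀ n) ^ j * (σ n (c + 1) * σ n 1) * ((α₀ n) ^ j)⁻¹ := by rw [base]
    _ = ((α₀ n) ^ j * σ n (c + 1) * ((α₀ n) ^ j)⁻¹) * ((α₀ n) ^ j * σ n 1 * ((α₀ n) ^ j)⁻¹) := by
        group

/-- `t = T α₀`. -/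
def tt (n : ℕ) : EM n := T n * α₀ n

lemma T_inv : (T n)⁻¹ = T n := by
  rw [inv_eq_iff_mul_eq_one]; exact T_mul_T

lemma T_comm_pow (m : ℕ) : T n * (α₀ n) ^ m = (α₀ n) ^ m * T n := by
  have c : Commute (T n) (α₀ n) := Tα₀_comm
  exact (c.pow_right m).eq

lemma TssT (m : ℕ) : T n * ss n m * T n = (ss n m)⁻¹ := by
  have hσ : T n * σ n 1 * T n = (σ n 1)⁻¹ := TσT 1
  have hc := T_comm_pow (n := n) m
  have hci : T n * ((α₀ n) ^ m)⁻¹ = ((α₀ n) ^ m)⁻¹ * T n := by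
    have c : Commute (T n) (α₀ n) := Tα₀_comm
    exact ((c.pow_right m).inv_right).eq
  have hT := T_mul_T (n := n)
  calc T n * ss n m * T n
      = (T n * (α₀ n) ^ m) * (σ n 1 * (((α₀ n) ^ m)⁻¹ * T n)) := by rw [ss]; group
    _ = ((α₀ n) ^ m * T n) * (σ n 1 * (T n * ((α₀ n) ^ m)⁻¹)) := by rw [hc, ← hci]
    _ = (α₀ n) ^ m * (T n * σ n 1 * T n) * ((α₀ n) ^ m)⁻¹ := by group
    _ = (α₀ n) ^ m * (σ n 1)⁻¹ * ((α₀ n) ^ m)⁻¹ := by rw [hσ]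
    _ = (ss n m)⁻¹ := by rw [ss]; group

lemma tt_inv : (tt n)⁻¹ = (α₀ n)⁻¹ * T n := by
  rw [tt, mul_inv_rev, T_inv]

lemma tt_conj (j : ℕ) : tt n * ss n j * (tt n)⁻¹ = (ss n (j + 1))⁻¹ := by
  rw [tt_inv, tt]
  calc T n * α₀ n * ss n j * ((α₀ n)⁻¹ * T n)
      = T n * (α₀ n * ss n j * (α₀ n)⁻¹) * T n := by group
    _ = T n * ss n (j + 1) * T n := by rw [← ss_succ]
    _ = (ss n (j + 1))⁻¹ := TssT (j + 1)

lemma t_s (j : ℕ) : tt n * ss n j = (ss n (j + 1))⁻¹ * tt n := by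
  have h := tt_conj (n := n) j
  calc tt n * ss n j = (tt n * ss n j * (tt n)⁻¹) * tt n := by group
    _ = (ss n (j + 1))⁻¹ * tt n := by rw [h]

lemma t_si (j : ℕ) : tt n * (ss n j)⁻¹ = ss n (j + 1) * tt n := by
  have h := t_s (n := n) j
  calc tt n * (ss n j)⁻¹ = ss n (j+1) * ((ss n (j+1))⁻¹ * tt n) * (ss n j)⁻¹ := by group
    _ = ss n (j+1) * (tt n * ss n j) * (ss n j)⁻¹ := by rw [← h]
    _ = ss n (j + 1) * tt n := by group

lemma ti_s (j : ℕ) : (tt n)⁻¹ * ss n (j + 1) = (ss n j)⁻¹ * (tt n)⁻¹ := by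
  have h := t_si (n := n) j
  calc (tt n)⁻¹ * ss n (j + 1) = (tt n)⁻¹ * (ss n (j+1) * tt n) * (tt n)⁻¹ := by group
    _ = (tt n)⁻¹ * (tt n * (ss n j)⁻¹) * (tt n)⁻¹ := by rw [← h]
    _ = (ss n j)⁻¹ * (tt n)⁻¹ := by group

lemma ti_si (j : ℕ) : (tt n)⁻¹ * (ss n (j + 1))⁻¹ = ss n j * (tt n)⁻¹ := by
  have h := t_s (n := n) j
  calc (tt n)⁻¹ * (ss n (j + 1))⁻¹ = (tt n)⁻¹ * ((ss n (j+1))⁻¹ * tt n) * (tt n)⁻¹ := by group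
    _ = (tt n)⁻¹ * (tt n * ss n j) * (tt n)⁻¹ := by rw [← h]
    _ = ss n j * (tt n)⁻¹ := by group

lemma tt_sq : tt n * tt n = (α₀ n) ^ 2 := by
  have h := Tα₀_comm (n := n)
  have hT := T_mul_T (n := n)
  calc tt n * tt n = T n * (α₀ n * T n) * α₀ n := by rw [tt]; group
    _ = T n * (T n * α₀ n) * α₀ n := by rw [← h]
    _ = (T n * T n) * (α₀ n * α₀ n) := by group
    _ = α₀ n * α₀ n := by rw [hT]; group
    _ = (α₀ n) ^ 2 := by rw [pow_two]

lemma ss_eq_mod (i : ℕ) : ss n i = ss n (i % n) := by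
  conv_lhs => rw [← Nat.mod_add_div i n]
  exact ss_per (i % n) (i / n)

lemma even_mod (heven : Even n) {i : ℕ} (hi : Even i) : Even (i % n) := by
  have h := Nat.mod_add_div i n
  have h2 : Even (n * (i / n)) := heven.mul_right _
  rw [Nat.even_iff] at hi h2 ⊢
  omega

lemma comm_even_core (hn : 6 ≤ n) (heven : Even n) {i j : ℕ} (hij : i ≤ j) (hi : i ≤ n - 1)
    (hj : j ≤ n - 1) (hev : Even (j - i)) : Commute (ss n i) (ss n j) := by
  rcases Nat.eq_or_lt_of_le hij with heq | hlt
  · rw [heq]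
  · have h2 : 2 ≤ j - i := by
      rcases hev with ⟨c, hc⟩
      omega
    have h4 : j - i ≤ n - 2 := by
      rw [Nat.even_iff] at hev heven
      omega
    have := ss_comm (n := n) i (j - i) h2 h4
    have hji : i + (j - i) = j := by omega
    rw [hji] at this
    exact this

lemma comm_even (hn : 6 ≤ n) (heven : Even n) (i j : ℕ) (hi : Even i) (hj : Even j) :
    Commute (ss n i) (ss n j) := by
  rw [ss_eq_mod i, ss_eq_mod j]
  have hin : Even (i % n) := even_mod heven hi
  have hjn : Even (j % n) := even_mod heven hj
  have hi1 : i % n ≤ n - 1 := by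
    have := Nat.mod_lt i (show 0 < n by omega); omega
  have hj1 : j % n ≤ n - 1 := by
    have := Nat.mod_lt j (show 0 < n by omega); omega
  rcases le_total (i % n) (j % n) with hle | hle
  · exact comm_even_core hn heven hle hi1 hj1 (by
      rw [Nat.even_iff] at hin hjn ⊢; omega)
  · exact (comm_even_core hn heven hle hj1 hi1 (by
      rw [Nat.even_iff] at hin hjn ⊢; omega)).symm

lemma σ_ss (hn : 6 ≤ n) {j i : ℕ} (hj : j ≤ n - 2) (hij : j + 1 = i) : σ n i = ss n j := by
  rw [← hij]; exact (ss_σ j hj).symm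

lemma a_eq (hn : 6 ≤ n) :
    σ n (n - 3) * T n * α₀ n * (σ n (n - 3))⁻¹ = ss n (n - 4) * ss n (n - 3) * tt n := by
  have h1 : σ n (n - 3) = ss n (n - 4) := σ_ss hn (by omega) (by omega)
  have h2 : tt n * (ss n (n - 4))⁻¹ = ss n (n - 3) * tt n := by
    have := t_si (n := n) (n - 4)
    have he : n - 4 + 1 = n - 3 := by omega
    rwa [he] at this
  calc σ n (n - 3) * T n * α₀ n * (σ n (n - 3))⁻¹
      = ss n (n - 4) * (tt n * (ss n (n - 4))⁻¹) := by rw [h1, tt]; group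
    _ = ss n (n - 4) * (ss n (n - 3) * tt n) := by rw [h2]
    _ = ss n (n - 4) * ss n (n - 3) * tt n := by group

lemma Lp_one (a : ℕ) : Lp n a 1 = σ n a := by
  rw [Lp_succ_left, Lp_zero, mul_one]

lemma α₀_split (hn : 6 ≤ n) : α₀ n = Lp n 1 (n - 2) * σ n (n - 1) := by
  have h : (n - 2) + 1 = n - 1 := by omega
  rw [α₀_Lp, ← h, Lp_append, Lp_one, Nat.add_comm 1 (n - 2)]

lemma α₂_eq (hn : 6 ≤ n) : α₂ n = α₀ n * (σ n (n - 1))⁻¹ * σ n (n - 2) := by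
  have h1 : α₂ n = Lp n 1 (n - 2) * σ n (n - 2) := by
    rw [α₂, map_mul, σfProd]
    have h : (n - 2) + 1 - 1 = n - 2 := by omega
    rw [h, mk_prod]; rfl
  rw [h1, α₀_split hn]; group

lemma Tσinv (i : ℕ) : T n * (σ n i)⁻¹ = σ n i * T n := by
  have h := TσT (n := n) i
  have hT := T_mul_T (n := n)
  calc T n * (σ n i)⁻¹ = T n * (T n * σ n i * T n) := by rw [h]
    _ = (T n * T n) * (σ n i * T n) := by group
    _ = σ n i * T n := by rw [hT]; group

lemma b_eq (hn : 6 ≤ n) :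
    T n * (σ n (n - 1))⁻¹ * α₂ n = ss n (n - 2) * ss n (n - 1) * (ss n (n - 2))⁻¹ * tt n := by
  have h1 : σ n (n - 1) = ss n (n - 2) := σ_ss hn (by omega) (by omega)
  have h2 : σ n (n - 2) = ss n (n - 3) := σ_ss hn (by omega) (by omega)
  have h3 : tt n * (ss n (n - 2))⁻¹ = ss n (n - 1) * tt n := by
    have := t_si (n := n) (n - 2)
    have he : n - 2 + 1 = n - 1 := by omega
    rwa [he] at this
  have h4 : tt n * ss n (n - 3) = (ss n (n - 2))⁻¹ * tt n := by
    have := t_s (n := n) (n - 3)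
    have he : n - 3 + 1 = n - 2 := by omega
    rwa [he] at this
  calc T n * (σ n (n - 1))⁻¹ * α₂ n
      = (T n * (σ n (n - 1))⁻¹) * (α₀ n * (σ n (n - 1))⁻¹ * σ n (n - 2)) := by
        rw [α₂_eq hn]
    _ = (σ n (n - 1) * T n) * (α₀ n * (σ n (n - 1))⁻¹ * σ n (n - 2)) := by rw [Tσinv]
    _ = ss n (n - 2) * tt n * (ss n (n - 2))⁻¹ * ss n (n - 3) := by rw [h1, h2, tt]; group
    _ = ss n (n - 2) * (ss n (n - 1) * tt n) * ss n (n - 3) := by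
        rw [mul_assoc (ss n (n-2)), h3]
    _ = ss n (n - 2) * ss n (n - 1) * (tt n * ss n (n - 3)) := by group
    _ = ss n (n - 2) * ss n (n - 1) * ((ss n (n - 2))⁻¹ * tt n) := by rw [h4]
    _ = ss n (n - 2) * ss n (n - 1) * (ss n (n - 2))⁻¹ * tt n := by group

/-- `Γ j = s_j s_{j+2} s_{j+4}⁻¹`. -/
def Γn (n j : ℕ) : EM n := ss n j * ss n (j + 2) * (ss n (j + 4))⁻¹

lemma conj2 (m : ℕ) : (α₀ n) ^ 2 * ss n m * ((α₀ n) ^ 2)⁻¹ = ss n (m + 2) := by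
  have := ss_add (n := n) 2 m
  rw [add_comm] at this
  rw [this]

lemma conj2_Γ (j : ℕ) : (α₀ n) ^ 2 * Γn n j * ((α₀ n) ^ 2)⁻¹ = Γn n (j + 2) := by
  have h1 := conj2 (n := n) j
  have h2 := conj2 (n := n) (j + 2)
  have h3 := conj2 (n := n) (j + 4)
  have e2 : j + 2 + 2 = j + 4 := by omega
  have e3 : j + 4 + 2 = j + 2 + 4 := by omega
  rw [e2] at h2
  rw [e3] at h3
  calc (α₀ n) ^ 2 * Γn n j * ((α₀ n) ^ 2)⁻¹
      = ((α₀ n) ^ 2 * ss n j * ((α₀ n) ^ 2)⁻¹) * ((α₀ n) ^ 2 * ss n (j + 2) * ((α₀ n) ^ 2)⁻¹) *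
        ((α₀ n) ^ 2 * ss n (j + 4) * ((α₀ n) ^ 2)⁻¹)⁻¹ := by rw [Γn]; group
    _ = Γn n (j + 2) := by rw [h1, h2, h3, Γn]

lemma aa_sq (hn : 6 ≤ n) :
    (ss n (n - 4) * ss n (n - 3) * tt n) * (ss n (n - 4) * ss n (n - 3) * tt n)
      = ss n (n - 4) * (ss n (n - 2))⁻¹ * (α₀ n) ^ 2 := by
  have h1 : tt n * ss n (n - 4) = (ss n (n - 3))⁻¹ * tt n := by
    have := t_s (n := n) (n - 4); rwa [show n - 4 + 1 = n - 3 by omega] at this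
  have h2 : tt n * ss n (n - 3) = (ss n (n - 2))⁻¹ * tt n := by
    have := t_s (n := n) (n - 3); rwa [show n - 3 + 1 = n - 2 by omega] at this
  calc (ss n (n - 4) * ss n (n - 3) * tt n) * (ss n (n - 4) * ss n (n - 3) * tt n)
      = ss n (n - 4) * ss n (n - 3) * ((tt n * ss n (n - 4)) * ss n (n - 3)) * tt n := by group
    _ = ss n (n - 4) * ss n (n - 3) * (((ss n (n - 3))⁻¹ * tt n) * ss n (n - 3)) * tt n := by
        rw [h1]
    _ = ss n (n - 4) * ss n (n - 3) * (ss n (n - 3))⁻¹ * (tt n * ss n (n - 3)) * tt n := by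
        group
    _ = ss n (n - 4) * ss n (n - 3) * (ss n (n - 3))⁻¹ * ((ss n (n - 2))⁻¹ * tt n) * tt n := by
        rw [h2]
    _ = ss n (n - 4) * (ss n (n - 2))⁻¹ * (tt n * tt n) := by group
    _ = ss n (n - 4) * (ss n (n - 2))⁻¹ * (α₀ n) ^ 2 := by rw [tt_sq]

lemma step_Γ (hn : 6 ≤ n) (heven : Even n) (j : ℕ) (hj : Even j) :
    (ss n (n - 4) * ss n (n - 3) * tt n) * (ss n (n - 4) * ss n (n - 3) * tt n) * Γn n j *
      ((ss n (n - 4) * ss n (n - 3) * tt n) * (ss n (n - 4) * ss n (n - 3) * tt n))⁻¹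
      = Γn n (j + 2) := by
  have hev4 : Even (n - 4) := by
    rw [Nat.even_iff] at heven ⊢; omega
  have hev2 : Even (n - 2) := by
    rw [Nat.even_iff] at heven ⊢; omega
  have hevj2 : Even (j + 2) := by rw [Nat.even_iff] at hj ⊢; omega
  have hevj4 : Even (j + 4) := by rw [Nat.even_iff] at hj ⊢; omega
  have hevj6 : Even (j + 6) := by rw [Nat.even_iff] at hj ⊢; omega
  have cd : Commute (ss n (n - 4) * (ss n (n - 2))⁻¹) (Γn n (j + 2)) := by
    have c1 : Commute (ss n (n - 4)) (Γn n (j + 2)) := by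
      refine Commute.mul_right (Commute.mul_right ?_ ?_) (Commute.inv_right ?_)
      · exact comm_even hn heven _ _ hev4 hevj2
      · exact comm_even hn heven _ _ hev4 hevj4
      · have h := comm_even hn heven (n - 4) (j + 2 + 4) hev4 (by rwa [show j + 2 + 4 = j + 6 by omega])
        exact h
    have c2 : Commute (ss n (n - 2)) (Γn n (j + 2)) := by
      refine Commute.mul_right (Commute.mul_right ?_ ?_) (Commute.inv_right ?_)
      · exact comm_even hn heven _ _ hev2 hevj2
      · exact comm_even hn heven _ _ hev2 hevj4
      · have h := comm_even hn heven (n - 2) (j + 2 + 4) hev2 (by rwa [show j + 2 + 4 = j + 6 by omega])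
        exact h
    exact Commute.mul_left c1 c2.inv_left
  rw [aa_sq hn]
  calc ss n (n - 4) * (ss n (n - 2))⁻¹ * (α₀ n) ^ 2 * Γn n j *
        (ss n (n - 4) * (ss n (n - 2))⁻¹ * (α₀ n) ^ 2)⁻¹
      = (ss n (n - 4) * (ss n (n - 2))⁻¹) * ((α₀ n) ^ 2 * Γn n j * ((α₀ n) ^ 2)⁻¹) *
        (ss n (n - 4) * (ss n (n - 2))⁻¹)⁻¹ := by group
    _ = (ss n (n - 4) * (ss n (n - 2))⁻¹) * Γn n (j + 2) *
        (ss n (n - 4) * (ss n (n - 2))⁻¹)⁻¹ := by rw [conj2_Γ]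
    _ = Γn n (j + 2) * (ss n (n - 4) * (ss n (n - 2))⁻¹) *
        (ss n (n - 4) * (ss n (n - 2))⁻¹)⁻¹ := by rw [cd.eq]
    _ = Γn n (j + 2) := by group

section Certificate

/-- Moves of the word-rewriting certificate. -/
inductive Mv
  | cancel | comm | braid | tpushP | tpushM | tcancel
  deriving DecidableEq

/-- Letters: `(100, b)` is `t^{±1}`; `(r, b)` is `s_{n-6+r}^{±1}`. -/
abbrev LL := ℕ × Bool

def evL (n : ℕ) (x : LL) : EM n :=
  if x.1 = 100 then (if x.2 then tt n else (tt n)⁻¹)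
  else (if x.2 then ss n (n - 6 + x.1) else (ss n (n - 6 + x.1))⁻¹)

def evW (n : ℕ) (w : List LL) : EM n := (w.map (evL n)).prod

lemma evW_nil : evW n [] = 1 := rfl

lemma evW_cons (x : LL) (w : List LL) : evW n (x :: w) = evL n x * evW n w := by
  simp [evW]

def braidRep : Bool → Bool → Bool → Option (Bool × Bool × Bool)
  | true, true, true => some (true, true, true)
  | false, false, false => some (false, false, false)
  | true, true, false => some (false, true, true)
  | false, true, true => some (true, true, false)
  | true, false, false => some (false, false, true)
  | false, false, true => some (true, false, false)
  | _, _, _ => none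

def ndist (i j : ℕ) : ℕ := max i j - min i j

def ruleApply : Mv → List LL → Option (List LL)
  | .tcancel, (i, e) :: (j, f) :: r =>
      if i = 100 ∧ j = 100 ∧ e = !f then some r else none
  | .cancel, (i, e) :: (j, f) :: r =>
      if i ≠ 100 ∧ i = j ∧ e = !f then some r else none
  | .comm, (i, e) :: (j, f) :: r =>
      if i ≠ 100 ∧ j ≠ 100 ∧ 2 ≤ ndist i j ∧ ndist i j ≤ 4 then
        some ((j, f) :: (i, e) :: r) else none
  | .tpushP, (i, e) :: (j, f) :: r =>
      if i = 100 ∧ e = true ∧ j ≠ 100 ∧ j + 1 ≠ 100 then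
        some ((j + 1, !f) :: (100, true) :: r) else none
  | .tpushM, (i, e) :: (j, f) :: r =>
      if i = 100 ∧ e = false ∧ j ≠ 100 ∧ 1 ≤ j ∧ j - 1 ≠ 100 then
        some ((j - 1, !f) :: (100, false) :: r) else none
  | .braid, (i, e) :: (j, f) :: (k, g) :: r =>
      if k = i ∧ i ≠ 100 ∧ j ≠ 100 ∧ (i = j + 1 ∨ j = i + 1) then
        match braidRep e f g with
        | some (e', f', g') => some ((j, e') :: (i, f') :: (j, g') :: r)
        | none => none
      else none
  | _, _ => none

def stepA : ℕ → Mv → List LL → Option (List LL)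
  | 0, m, w => ruleApply m w
  | p + 1, m, x :: xs => (stepA p m xs).map (x :: ·)
  | _ + 1, _, [] => none

def runC : List (ℕ × Mv) → List LL → Option (List LL)
  | [], w => some w
  | (p, m) :: rest, w =>
      match stepA p m w with
      | some w' => runC rest w'
      | none => none

variable {G : Type*} [Group G]

lemma br_ttf {x y : G} (h : x * y * x = y * x * y) : x * y * x⁻¹ = y⁻¹ * x * y := by
  calc x * y * x⁻¹ = y⁻¹ * (y * x * y) * x⁻¹ := by group
    _ = y⁻¹ * (x * y * x) * x⁻¹ := by rw [h]
    _ = y⁻¹ * x * y := by group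

lemma br_ftt {x y : G} (h : x * y * x = y * x * y) : x⁻¹ * y * x = y * x * y⁻¹ := by
  calc x⁻¹ * y * x = x⁻¹ * (y * x * y) * y⁻¹ := by group
    _ = x⁻¹ * (x * y * x) * y⁻¹ := by rw [h]
    _ = y * x * y⁻¹ := by group

lemma br_tff {x y : G} (h : x * y * x = y * x * y) : x * y⁻¹ * x⁻¹ = y⁻¹ * x⁻¹ * y := by
  have h2 := br_ttf h
  calc x * y⁻¹ * x⁻¹ = (x * y * x⁻¹)⁻¹ * x * x⁻¹ * x * x⁻¹ := by group
    _ = (y⁻¹ * x * y)⁻¹ := by rw [h2]; group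
    _ = y⁻¹ * x⁻¹ * y := by group

lemma br_fft {x y : G} (h : x * y * x = y * x * y) : x⁻¹ * y⁻¹ * x = y * x⁻¹ * y⁻¹ := by
  have h2 := br_ftt h
  calc x⁻¹ * y⁻¹ * x = (x⁻¹ * y * x)⁻¹ := by group
    _ = (y * x * y⁻¹)⁻¹ := by rw [h2]
    _ = y * x⁻¹ * y⁻¹ := by group

lemma br_fff {x y : G} (h : x * y * x = y * x * y) : x⁻¹ * y⁻¹ * x⁻¹ = y⁻¹ * x⁻¹ * y⁻¹ := by
  calc x⁻¹ * y⁻¹ * x⁻¹ = (x * y * x)⁻¹ := by group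
    _ = (y * x * y)⁻¹ := by rw [h]
    _ = y⁻¹ * x⁻¹ * y⁻¹ := by group

end Certificate

section Soundness

lemma comm_letters (hn : 6 ≤ n) {i j : ℕ} (h2 : 2 ≤ ndist i j) (h4 : ndist i j ≤ 4) :
    Commute (ss n (n - 6 + i)) (ss n (n - 6 + j)) := by
  rcases le_total i j with hle | hle
  · rw [ndist, max_eq_right hle, min_eq_left hle] at h2 h4
    have hc := ss_comm (n := n) (n - 6 + i) (j - i) h2 (by omega)
    rw [show n - 6 + i + (j - i) = n - 6 + j by omega] at hc
    exact hc
  · rw [ndist, max_eq_left hle, min_eq_right hle] at h2 h4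
    have hc := ss_comm (n := n) (n - 6 + j) (i - j) h2 (by omega)
    rw [show n - 6 + j + (i - j) = n - 6 + i by omega] at hc
    exact hc.symm

lemma evL_st (i : ℕ) (hi : i ≠ 100) : evL n (i, true) = ss n (n - 6 + i) := by
  simp [evL, hi]

lemma evL_sf (i : ℕ) (hi : i ≠ 100) : evL n (i, false) = (ss n (n - 6 + i))⁻¹ := by
  simp [evL, hi]

lemma evL_tt : evL n (100, true) = tt n := by simp [evL]

lemma evL_tf : evL n (100, false) = (tt n)⁻¹ := by simp [evL]

lemma braid_case (hn : 6 ≤ n) {i j : ℕ} (hi100 : i ≠ 100) (hj100 : j ≠ 100)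
    (hb : ss n (n - 6 + i) * ss n (n - 6 + j) * ss n (n - 6 + i)
        = ss n (n - 6 + j) * ss n (n - 6 + i) * ss n (n - 6 + j))
    {e f g e' f' g' : Bool} (hrep : braidRep e f g = some (e', f', g')) (r : List LL) :
    evW n ((i, e) :: (j, f) :: (i, g) :: r) = evW n ((j, e') :: (i, f') :: (j, g') :: r) := by
  have key : evL n (i, e) * evL n (j, f) * evL n (i, g)
      = evL n (j, e') * evL n (i, f') * evL n (j, g') := by
    cases e <;> cases f <;> cases g <;>
      simp only [braidRep, Option.some.injEq, Prod.mk.injEq, reduceCtorEq] at hrep <;>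
      obtain ⟨he, hf, hg⟩ := hrep <;> subst he <;> subst hf <;> subst hg <;>
      simp only [evL_st _ hi100, evL_st _ hj100, evL_sf _ hi100, evL_sf _ hj100] <;>
      first
        | exact hb
        | exact br_ttf hb
        | exact br_ftt hb
        | exact br_tff hb
        | exact br_fft hb
        | exact br_fff hb
  calc evW n ((i, e) :: (j, f) :: (i, g) :: r)
      = evL n (i, e) * evL n (j, f) * evL n (i, g) * evW n r := by
        rw [evW_cons, evW_cons, evW_cons]; group
    _ = evL n (j, e') * evL n (i, f') * evL n (j, g') * evW n r := by rw [key]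
    _ = evW n ((j, e') :: (i, f') :: (j, g') :: r) := by
        rw [evW_cons, evW_cons, evW_cons]; group

end Soundness

lemma rule_sound (hn : 6 ≤ n) (m : Mv) (w w' : List LL)
    (h : ruleApply m w = some w') : evW n w = evW n w' := by
  cases m with
  | tcancel =>
      rcases w with _ | ⟨⟨i, e⟩, _ | ⟨⟨j, f⟩, r⟩⟩
      · simp [ruleApply] at h
      · simp [ruleApply] at h
      · simp only [ruleApply] at h
        split_ifs at h with hc
        obtain ⟨hi, hj, hef⟩ := hc
        subst hi; subst hj; subst hef
        cases Option.some.inj h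
        rw [evW_cons, evW_cons, ← mul_assoc]
        cases f <;> simp [evL_tt, evL_tf]
  | cancel =>
      rcases w with _ | ⟨⟨i, e⟩, _ | ⟨⟨j, f⟩, r⟩⟩
      · simp [ruleApply] at h
      · simp [ruleApply] at h
      · simp only [ruleApply] at h
        split_ifs at h with hc
        obtain ⟨hi, hj, hef⟩ := hc
        subst hj; subst hef
        cases Option.some.inj h
        rw [evW_cons, evW_cons, ← mul_assoc]
        cases f <;> simp [evL_st _ hi, evL_sf _ hi]
  | comm =>
      rcases w with _ | ⟨⟨i, e⟩, _ | ⟨⟨j, f⟩, r⟩⟩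
      · simp [ruleApply] at h
      · simp [ruleApply] at h
      · simp only [ruleApply] at h
        split_ifs at h with hc
        obtain ⟨hi, hj, h2, h4⟩ := hc
        cases Option.some.inj h
        have c := comm_letters hn h2 h4
        have key : evL n (i, e) * evL n (j, f) = evL n (j, f) * evL n (i, e) := by
          cases e <;> cases f <;>
            simp only [evL_st _ hi, evL_st _ hj, evL_sf _ hi, evL_sf _ hj] <;>
            first
              | exact c.eq
              | exact c.inv_right.eq
              | exact c.inv_left.eq
              | exact c.inv_left.inv_right.eq
        rw [evW_cons, evW_cons, evW_cons, evW_cons, ← mul_assoc, ← mul_assoc, key]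
  | tpushP =>
      rcases w with _ | ⟨⟨i, e⟩, _ | ⟨⟨j, f⟩, r⟩⟩
      · simp [ruleApply] at h
      · simp [ruleApply] at h
      · simp only [ruleApply] at h
        split_ifs at h with hc
        obtain ⟨hi, he, hj, hj1⟩ := hc
        subst hi; subst he
        cases Option.some.inj h
        have key : evL n (100, true) * evL n (j, f) = evL n (j + 1, !f) * evL n (100, true) := by
          cases f <;>
            simp only [evL_tt, evL_st _ hj, evL_sf _ hj, Bool.not_false, Bool.not_true,
              evL_st (j + 1) hj1, evL_sf (j + 1) hj1]
          · rw [show n - 6 + (j + 1) = (n - 6 + j) + 1 by omega]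
            exact t_si _
          · rw [show n - 6 + (j + 1) = (n - 6 + j) + 1 by omega]
            exact t_s _
        rw [evW_cons, evW_cons, evW_cons, evW_cons, ← mul_assoc, ← mul_assoc, key]
  | tpushM =>
      rcases w with _ | ⟨⟨i, e⟩, _ | ⟨⟨j, f⟩, r⟩⟩
      · simp [ruleApply] at h
      · simp [ruleApply] at h
      · simp only [ruleApply] at h
        split_ifs at h with hc
        obtain ⟨hi, he, hj, hj1, hj2⟩ := hc
        subst hi; subst he
        cases Option.some.inj h
        have key : evL n (100, false) * evL n (j, f)
            = evL n (j - 1, !f) * evL n (100, false) := by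
          cases f <;>
            simp only [evL_tf, evL_st _ hj, evL_sf _ hj, Bool.not_false, Bool.not_true,
              evL_st (j - 1) hj2, evL_sf (j - 1) hj2]
          · rw [show n - 6 + j = (n - 6 + (j - 1)) + 1 by omega]
            exact ti_si _
          · rw [show n - 6 + j = (n - 6 + (j - 1)) + 1 by omega]
            exact ti_s _
        rw [evW_cons, evW_cons, evW_cons, evW_cons, ← mul_assoc, ← mul_assoc, key]
  | braid =>
      rcases w with _ | ⟨⟨i, e⟩, _ | ⟨⟨j, f⟩, _ | ⟨⟨k, g⟩, r⟩⟩⟩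
      · simp [ruleApply] at h
      · simp [ruleApply] at h
      · simp [ruleApply] at h
      · simp only [ruleApply] at h
        split_ifs at h with hc
        obtain ⟨hk, hi100, hj100, hadj⟩ := hc
        subst hk
        have hb : ss n (n - 6 + k) * ss n (n - 6 + j) * ss n (n - 6 + k)
            = ss n (n - 6 + j) * ss n (n - 6 + k) * ss n (n - 6 + j) := by
          rcases hadj with hij | hij
          · have hbase := ss_braid hn (n - 6 + j)
            rw [show n - 6 + j + 1 = n - 6 + k by omega] at hbase
            exact hbase.symm
          · have hbase := ss_braid hn (n - 6 + k)
            rw [show n - 6 + k + 1 = n - 6 + j by omega] at hbase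
            exact hbase
        rcases hrep : braidRep e f g with _ | ⟨⟨e', f', g'⟩⟩
        · rw [hrep] at h; simp at h
        · rw [hrep] at h
          cases Option.some.inj h
          exact braid_case hn hi100 hj100 hb hrep r

lemma stepA_sound (hn : 6 ≤ n) : ∀ (p : ℕ) (m : Mv) (w w' : List LL),
    stepA p m w = some w' → evW n w = evW n w' := by
  intro p
  induction p with
  | zero => intro m w w' h; exact rule_sound hn m w w' h
  | succ q ih =>
      intro m w w' h
      rcases w with _ | ⟨x, xs⟩
      · simp [stepA] at h
      · simp only [stepA] at h
        rcases Option.map_eq_some_iff.mp h with ⟨w₁, h1, rfl⟩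
        rw [evW_cons, evW_cons, ih m xs w₁ h1]

lemma runC_sound (hn : 6 ≤ n) : ∀ (moves : List (ℕ × Mv)) (w w' : List LL),
    runC moves w = some w' → evW n w = evW n w' := by
  intro moves
  induction moves with
  | nil => intro w w' h; cases Option.some.inj h; rfl
  | cons pm rest ih =>
      intro w w' h
      obtain ⟨p, m⟩ := pm
      simp only [runC] at h
      rcases hs : stepA p m w with _ | w₁
      · rw [hs] at h; simp at h
      · rw [hs] at h
        exact (stepA_sound hn p m w w₁ hs).trans (ih w₁ w' h)

def W0 : List LL := [(100, false), (4, true), (5, false), (4, false), (100, false), (4, true), (5, false), (4, false), (2, true), (3, true), (100, true), (4, true), (5, true), (4, false), (100, true), (2, true), (3, true), (100, true), (100, false), (4, true), (5, false), (4, false), (100, false), (3, false), (2, false), (4, true), (5, true), (4, false), (100, true), (4, true), (5, true), (4, false), (100, true), (100, false), (3, false), (2, false), (100, false), (4, true), (5, false), (4, false), (2, true), (3, true), (100, true)]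

def certMoves : List (ℕ × Mv) := [(0, Mv.tpushM), (1, Mv.tpushM), (2, Mv.tpushM), (4, Mv.tpushM), (3, Mv.tpushM), (5, Mv.tpushM), (4, Mv.tpushM), (6, Mv.tpushM), (5, Mv.tpushM), (7, Mv.tpushM), (6, Mv.tpushM), (8, Mv.tpushM), (7, Mv.tpushM), (9, Mv.tcancel), (8, Mv.tpushM), (9, Mv.tpushM), (10, Mv.tpushM), (11, Mv.tcancel), (13, Mv.tcancel), (16, Mv.tpushM), (17, Mv.tpushM), (18, Mv.tpushM), (19, Mv.tpushM), (20, Mv.tpushM), (21, Mv.tcancel), (24, Mv.tcancel), (26, Mv.tpushM), (27, Mv.tpushM), (28, Mv.tpushM), (29, Mv.tpushM), (30, Mv.tpushM), (31, Mv.tcancel), (24, Mv.braid), (18, Mv.braid), (20, Mv.cancel), (0, Mv.braid), (13, Mv.braid), (8, Mv.braid), (3, Mv.braid), (12, Mv.comm), (8, Mv.braid), (24, Mv.comm), (5, Mv.comm), (19, Mv.comm), (6, Mv.comm), (7, Mv.cancel), (4, Mv.comm), (6, Mv.comm), (7, Mv.comm), (19, Mv.comm), (9, Mv.comm), (1, Mv.braid),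 (0, Mv.cancel), (3, Mv.comm), (5, Mv.comm), (22, Mv.comm), (6, Mv.comm), (11, Mv.comm), (1, Mv.comm), (2, Mv.cancel), (5, Mv.braid), (8, Mv.comm), (15, Mv.comm), (13, Mv.comm), (20, Mv.comm), (10, Mv.comm), (1, Mv.comm), (15, Mv.comm), (20, Mv.comm), (18, Mv.comm), (1, Mv.comm), (9, Mv.comm), (15, Mv.comm), (3, Mv.comm), (0, Mv.comm), (10, Mv.braid), (5, Mv.braid), (15, Mv.comm), (3, Mv.comm), (12, Mv.comm), (13, Mv.cancel), (3, Mv.comm), (13, Mv.comm), (5, Mv.braid), (14, Mv.braid), (11, Mv.braid), (13, Mv.cancel), (16, Mv.comm), (12, Mv.comm), (0, Mv.comm), (3, Mv.comm), (4, Mv.comm), (13, Mv.braid), (15, Mv.cancel), (11, Mv.braid), (14, Mv.comm), (5, Mv.comm), (9, Mv.comm), (6, Mv.comm), (4, Mv.braid), (14, Mv.comm), (8, Mv.comm), (7, Mv.cancel), (12, Mv.comm), (13, Mv.comm), (0, Mv.comm), (9, Mv.braid), (5, Mv.braid), (8, Mv.comm), (7, Mv.cancel), (3, Mv.comm), (6,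 Mv.braid), (0, Mv.comm), (4, Mv.comm), (5, Mv.cancel), (6, Mv.comm), (7, Mv.cancel), (7, Mv.comm), (0, Mv.comm), (4, Mv.braid), (2, Mv.braid), (1, Mv.cancel), (2, Mv.cancel), (0, Mv.comm), (2, Mv.comm), (3, Mv.cancel), (0, Mv.comm)]

def Wtgt : List LL := [(0, true), (2, true), (4, false)]

lemma cert_run : runC certMoves W0 = some Wtgt := by decide

lemma base_eq (hn : 6 ≤ n) : evW n W0 = Γn n (n - 6) := by
  have h := runC_sound hn certMoves W0 Wtgt cert_run
  rw [h]
  show evW n [(0, true), (2, true), (4, false)] = Γn n (n - 6)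
  simp only [evW, List.map_cons, List.map_nil, List.prod_cons, List.prod_nil,
    evL_st 0 (by omega), evL_st 2 (by omega), evL_sf 4 (by omega), Nat.add_zero, mul_one]
  rw [Γn, mul_assoc]

lemma base_word (hn : 6 ≤ n) :
    evW n W0 =
      (ss n (n - 2) * ss n (n - 1) * (ss n (n - 2))⁻¹ * tt n)⁻¹ *
      (ss n (n - 2) * ss n (n - 1) * (ss n (n - 2))⁻¹ * tt n)⁻¹ *
      (ss n (n - 4) * ss n (n - 3) * tt n) *
      (ss n (n - 2) * ss n (n - 1) * (ss n (n - 2))⁻¹ * tt n) *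
      (ss n (n - 4) * ss n (n - 3) * tt n) *
      (ss n (n - 2) * ss n (n - 1) * (ss n (n - 2))⁻¹ * tt n)⁻¹ *
      (ss n (n - 4) * ss n (n - 3) * tt n)⁻¹ *
      (ss n (n - 2) * ss n (n - 1) * (ss n (n - 2))⁻¹ * tt n) *
      (ss n (n - 2) * ss n (n - 1) * (ss n (n - 2))⁻¹ * tt n) *
      (ss n (n - 4) * ss n (n - 3) * tt n)⁻¹ *
      (ss n (n - 2) * ss n (n - 1) * (ss n (n - 2))⁻¹ * tt n)⁻¹ *
      (ss n (n - 4) * ss n (n - 3) * tt n) := by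
  have e2 : n - 6 + 2 = n - 4 := by omega
  have e3 : n - 6 + 3 = n - 3 := by omega
  have e4 : n - 6 + 4 = n - 2 := by omega
  have e5 : n - 6 + 5 = n - 1 := by omega
  show evW n W0 = _
  simp only [W0, evW, List.map_cons, List.map_nil, List.prod_cons, List.prod_nil,
    evL_st 2 (by omega), evL_st 3 (by omega), evL_st 4 (by omega), evL_st 5 (by omega),
    evL_sf 2 (by omega), evL_sf 3 (by omega), evL_sf 4 (by omega), evL_sf 5 (by omega),
    evL_tt, evL_tf, e2, e3, e4, e5, mul_one]
  group

lemma Γ_per (j : ℕ) : Γn n (j + n) = Γn n j := by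
  have p1 : ss n (j + n) = ss n j := by simpa using ss_per (n := n) j 1
  have p2 : ss n (j + 2 + n) = ss n (j + 2) := by simpa using ss_per (n := n) (j + 2) 1
  have p3 : ss n (j + 4 + n) = ss n (j + 4) := by simpa using ss_per (n := n) (j + 4) 1
  rw [Γn, Γn, show j + n + 2 = j + 2 + n by omega, show j + n + 4 = j + 4 + n by omega,
    p1, p2, p3]

lemma σ_mod_eq_ss (hn : 6 ≤ n) (heven : Even n) (j : ℕ) (hj : j % 2 = 1) :
    σ n (j % n) = ss n (j - 1) := by
  have hneven : n % 2 = 0 := Nat.even_iff.mp heven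
  have hmod : j % n % 2 = j % 2 := Nat.mod_mod_of_dvd j (even_iff_two_dvd.mp heven)
  have hj1 : 1 ≤ j % n := by omega
  have hjlt : j % n < n := Nat.mod_lt j (by omega)
  have h1 : ss n (j % n - 1) = σ n (j % n) := by
    have h := ss_σ (n := n) (j % n - 1) (by omega)
    rwa [show j % n - 1 + 1 = j % n by omega] at h
  obtain ⟨M, hM⟩ : ∃ m, n * (j / n) = m := ⟨_, rfl⟩
  have hdm : n * (j / n) + j % n = j := Nat.div_add_mod j n
  rw [hM] at hdm
  have h2 : ss n (j - 1) = ss n (j % n - 1) := by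
    have h := ss_per (n := n) (j % n - 1) (j / n)
    rw [hM, show j % n - 1 + M = j - 1 by omega] at h
    exact h
  rw [← h1, h2]

end EMAux

open EMAux

open SphereEMCG in
/-- For every even `n ≥ 6`, with `a = σ_{n-3} T α₀ σ_{n-3}⁻¹` and
`b = T σ_{n-1}⁻¹ α₂` in the extended mapping class group of the `n`-punctured
sphere, the element `γ_k = σ_k σ_{k+2} σ_{k+4}⁻¹` (indices taken modulo `n`,
which for odd `k` and even `n` lie in `{1, …, n-1}`) belongs to the subgroup
generated by `a` and `b`, for every odd `k`. -/
theorem γ_mem_closure (n : ℕ) (hn : 6 ≤ n) (heven : Even n)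
    (k : ℕ) (hk : Odd k) :
    σ n (k % n) * σ n ((k + 2) % n) * (σ n ((k + 4) % n))⁻¹ ∈
      Subgroup.closure
        {σ n (n - 3) * T n * α₀ n * (σ n (n - 3))⁻¹,
         T n * (σ n (n - 1))⁻¹ * α₂ n} := by

  set gA := σ n (n - 3) * T n * α₀ n * (σ n (n - 3))⁻¹ with hgA
  set gB := T n * (σ n (n - 1))⁻¹ * α₂ n with hgB
  set H := Subgroup.closure {gA, gB} with hH
  have memA : gA ∈ H := Subgroup.subset_closure (Set.mem_insert _ _)
  have memB : gB ∈ H :=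
    Subgroup.subset_closure (Set.mem_insert_of_mem _ (Set.mem_singleton _))
  have hA : gA = ss n (n - 4) * ss n (n - 3) * tt n := hgA.trans (a_eq hn)
  have hB : gB = ss n (n - 2) * ss n (n - 1) * (ss n (n - 2))⁻¹ * tt n := hgB.trans (b_eq hn)
  have hbase : Γn n (n - 6) ∈ H := by
    have hw : Γn n (n - 6)
        = gB⁻¹ * gB⁻¹ * gA * gB * gA * gB⁻¹ * gA⁻¹ * gB * gB * gA⁻¹ * gB⁻¹ * gA := by
      rw [hA, hB, ← base_word hn, base_eq hn]
    rw [hw]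
    exact mul_mem (mul_mem (mul_mem (mul_mem (mul_mem (mul_mem (mul_mem (mul_mem (mul_mem
      (mul_mem (mul_mem (inv_mem memB) (inv_mem memB)) memA) memB) memA) (inv_mem memB))
      (inv_mem memA)) memB) memB) (inv_mem memA)) (inv_mem memB)) memA
  have hstep : ∀ j, Even j → Γn n j ∈ H → Γn n (j + 2) ∈ H := by
    intro j hj hmem
    have h := step_Γ hn heven j hj
    rw [← hA] at h
    rw [← h]
    exact mul_mem (mul_mem (mul_mem memA memA) hmem) (inv_mem (mul_mem memA memA))
  have hall : ∀ m, Γn n (n - 6 + 2 * m) ∈ H := by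
    intro m
    induction m with
    | zero => simpa using hbase
    | succ p ih =>
        have h := hstep (n - 6 + 2 * p)
          (by rw [Nat.even_iff] at heven ⊢; omega) ih
        rwa [show n - 6 + 2 * p + 2 = n - 6 + 2 * (p + 1) by omega] at h
  have hkodd : k % 2 = 1 := Nat.odd_iff.mp hk
  rw [σ_mod_eq_ss hn heven k hkodd, σ_mod_eq_ss hn heven (k + 2) (by omega),
    σ_mod_eq_ss hn heven (k + 4) (by omega)]
  have hΓ : ss n (k - 1) * ss n (k + 2 - 1) * (ss n (k + 4 - 1))⁻¹ = Γn n (k - 1) := by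
    rw [Γn, show k - 1 + 2 = k + 2 - 1 by omega, show k - 1 + 4 = k + 4 - 1 by omega]
  rw [hΓ]
  have hm := hall ((k + 5) / 2)
  rw [show n - 6 + 2 * ((k + 5) / 2) = (k - 1) + n by omega, Γ_per] at hm
  exact hm
end
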